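/- arXiv:1906.02436 — 11 statements merged into one kernel-verified Lean document; each statement's English description precedes it below -/
import Mathlib

section
/- Let f : ℝ^d → ℝ be differentiable, μ-strongly convex and L-smooth with 0 < μ ≤ L, and let x* be a minimizer of f over the ℓ1 ball B_τ = {x : ‖x‖₁ ≤ τ}. Let η ∈ [0,1], let x ∈ B_τ, and let x̃ ∈ ℝ^d satisfy ⟨∇f(x), x̃⟩ + (Lη/2)‖x̃ − x‖² ≤ ⟨∇f(x), x*⟩ + (Lη/2)‖x* − x‖². Then the point x⁺ = (1 − η)x + η x̃ satisfies f(x⁺) − f(x*) ≤ (1 − η + (L/μ)η²)(f(x) − f(x*)). -/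
/-!
Since `x*` minimizes `f` over the convex ℓ¹ ball, first-order optimality gives
`⟪∇f(x*), x - x*⟫ ≥ 0`, so strong convexity at `x*` bounds `μ ‖x - x*‖²` by `2 (f x - f x*)`.
Smoothness at `x`, the defining inequality of `x̃` (tested against `x*`) and strong convexity at
`x` give `f x⁺ - f x* ≤ (1 - η) (f x - f x*) + (L η² - μ η) / 2 ‖x* - x‖²`, and the first bound
turns the last term into at most `(L / μ) η² (f x - f x*)`.
-/

open RealInnerProductSpace

theorem convex_setOf_sum_abs_le {ι : Type*} [Fintype ι] (τ : ℝ) :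
    Convex ℝ {x : EuclideanSpace ℝ ι | ∑ i, |x i| ≤ τ} := by
  intro x hx y hy a b ha hb hab
  calc ∑ i, |(a • x + b • y) i| ≤ ∑ i, (a * |x i| + b * |y i|) := by
        gcongr with i
        simpa [abs_mul, abs_of_nonneg ha, abs_of_nonneg hb] using abs_add_le (a * x i) (b * y i)
    _ = a * ∑ i, |x i| + b * ∑ i, |y i| := by
        rw [Finset.sum_add_distrib, Finset.mul_sum, Finset.mul_sum]
    _ ≤ a * τ + b * τ := by gcongr <;> assumption
    _ = τ := by rw [← add_mul, hab, one_mul]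

theorem IsMinOn.inner_gradient_sub_nonneg {E : Type*} [NormedAddCommGroup E]
    [InnerProductSpace ℝ E] [CompleteSpace E] {f : E → ℝ} {g a b : E} {s : Set E}
    (hs : Convex ℝ s) (hmin : IsMinOn f s a) (hf : HasGradientAt f g a) (ha : a ∈ s)
    (hb : b ∈ s) : 0 ≤ ⟪g, b - a⟫ := by
  simpa using hmin.localize.hasFDerivWithinAt_nonneg
    (hasGradientAt_iff_hasFDerivAt.mp hf).hasFDerivWithinAt
    (sub_mem_posTangentConeAt_of_segment_subset (hs.segment_subset ha hb))

theorem descent_step_sub_le {E : Type*} [NormedAddCommGroup E] [InnerProductSpace ℝ E]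
    {f : E → ℝ} {g x xstar xtil : E} {μ L η : ℝ} (hη : 0 ≤ η)
    (hsm : f ((1 - η) • x + η • xtil) ≤
      f x + ⟪g, (1 - η) • x + η • xtil - x⟫ + L / 2 * ‖(1 - η) • x + η • xtil - x‖ ^ 2)
    (hsc : f x + ⟪g, xstar - x⟫ + μ / 2 * ‖xstar - x‖ ^ 2 ≤ f xstar)
    (hxt : ⟪g, xtil⟫ + L * η / 2 * ‖xtil - x‖ ^ 2 ≤ ⟪g, xstar⟫ + L * η / 2 * ‖xstar - x‖ ^ 2) :
    f ((1 - η) • x + η • xtil) - f xstar ≤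
      (1 - η) * (f x - f xstar) + (L * η ^ 2 - μ * η) / 2 * ‖xstar - x‖ ^ 2 := by
  have hdir : (1 - η) • x + η • xtil - x = η • (xtil - x) := by module
  rw [hdir, real_inner_smul_right, inner_sub_right, norm_smul, Real.norm_eq_abs,
    abs_of_nonneg hη, mul_pow] at hsm
  rw [inner_sub_right] at hsc
  nlinarith [mul_le_mul_of_nonneg_left hxt hη, mul_le_mul_of_nonneg_left hsc hη]

theorem stmt_0_general {d : ℕ} (f : EuclideanSpace ℝ (Fin d) → ℝ)
    (f' : EuclideanSpace ℝ (Fin d) → EuclideanSpace ℝ (Fin d))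
    (μ L τ : ℝ) (hμ : 0 < μ) (hμL : μ ≤ L)
    (hdiff : ∀ x, HasGradientAt f (f' x) x)
    (hsc : ∀ u v, f u + ⟪f' u, v - u⟫ + μ / 2 * ‖v - u‖ ^ 2 ≤ f v)
    (hsm : ∀ u v, f v ≤ f u + ⟪f' u, v - u⟫ + L / 2 * ‖v - u‖ ^ 2)
    (xstar : EuclideanSpace ℝ (Fin d))
    (hxstar : ∑ i, |xstar i| ≤ τ)
    (hmin : ∀ x : EuclideanSpace ℝ (Fin d), (∑ i, |x i| ≤ τ) → f xstar ≤ f x)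
    (η : ℝ) (hη0 : 0 ≤ η)
    (x : EuclideanSpace ℝ (Fin d)) (hx : ∑ i, |x i| ≤ τ)
    (xtil : EuclideanSpace ℝ (Fin d))
    (hxt : ⟪f' x, xtil⟫ + L * η / 2 * ‖xtil - x‖ ^ 2 ≤
      ⟪f' x, xstar⟫ + L * η / 2 * ‖xstar - x‖ ^ 2) :
    f ((1 - η) • x + η • xtil) - f xstar ≤
      (1 - η + L / μ * η ^ 2) * (f x - f xstar) := by
  have hL : 0 ≤ L := hμ.le.trans hμL
  have hopt : 0 ≤ ⟪f' xstar, x - xstar⟫ :=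
    (isMinOn_iff.2 hmin).inner_gradient_sub_nonneg (convex_setOf_sum_abs_le τ) (hdiff xstar)
      hxstar hx
  have hdist : μ * ‖xstar - x‖ ^ 2 ≤ 2 * (f x - f xstar) := by
    rw [norm_sub_rev]
    linarith [hsc xstar x]
  have hcross : L * η ^ 2 * ‖xstar - x‖ ^ 2 ≤ L / μ * η ^ 2 * (2 * (f x - f xstar)) :=
    calc L * η ^ 2 * ‖xstar - x‖ ^ 2 = L / μ * η ^ 2 * (μ * ‖xstar - x‖ ^ 2) := by
          field_simp
      _ ≤ L / μ * η ^ 2 * (2 * (f x - f xstar)) := by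
          gcongr
  calc f ((1 - η) • x + η • xtil) - f xstar
      ≤ (1 - η) * (f x - f xstar) + (L * η ^ 2 - μ * η) / 2 * ‖xstar - x‖ ^ 2 :=
        descent_step_sub_le hη0 (hsm x _) (hsc x xstar) hxt
    _ ≤ (1 - η + L / μ * η ^ 2) * (f x - f xstar) := by
        linarith [mul_nonneg (mul_nonneg hμ.le hη0) (sq_nonneg ‖xstar - x‖)]

theorem stmt_0 {d : ℕ} (f : EuclideanSpace ℝ (Fin d) → ℝ)
    (f' : EuclideanSpace ℝ (Fin d) → EuclideanSpace ℝ (Fin d))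
    (μ L τ : ℝ) (hμ : 0 < μ) (hμL : μ ≤ L)
    (hdiff : ∀ x, HasGradientAt f (f' x) x)
    (hsc : ∀ u v, f u + ⟪f' u, v - u⟫ + μ / 2 * ‖v - u‖ ^ 2 ≤ f v)
    (hsm : ∀ u v, f v ≤ f u + ⟪f' u, v - u⟫ + L / 2 * ‖v - u‖ ^ 2)
    (xstar : EuclideanSpace ℝ (Fin d))
    (hxstar : ∑ i, |xstar i| ≤ τ)
    (hmin : ∀ x : EuclideanSpace ℝ (Fin d), (∑ i, |x i| ≤ τ) → f xstar ≤ f x)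
    (η : ℝ) (hη0 : 0 ≤ η) (hη1 : η ≤ 1)
    (x : EuclideanSpace ℝ (Fin d)) (hx : ∑ i, |x i| ≤ τ)
    (xtil : EuclideanSpace ℝ (Fin d))
    (hxt : ⟪f' x, xtil⟫ + L * η / 2 * ‖xtil - x‖ ^ 2 ≤
      ⟪f' x, xstar⟫ + L * η / 2 * ‖xstar - x‖ ^ 2) :
    f ((1 - η) • x + η • xtil) - f xstar ≤
      (1 - η + L / μ * η ^ 2) * (f x - f xstar) :=
  stmt_0_general f f' μ L τ hμ hμL hdiff hsc hsm xstar hxstar hmin η hη0 x hx xtil hxt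
end

section
/- Let f : ℝ^d → ℝ be differentiable, μ-strongly convex and L-smooth with 0 < μ ≤ L, let x* be a minimizer of f over the ℓ1 ball B_τ = {x : ‖x‖₁ ≤ τ}, and set η = μ/(2L). Let (x^t)_{t≥0} be a sequence with x^0 ∈ B_τ such that for each t ≥ 1, x^t = (1 − η)x^{t−1} + η x̃^t, where x̃^t ∈ B_τ satisfies ⟨∇f(x^{t−1}), x̃^t⟩ + (Lη/2)‖x̃^t − x^{t−1}‖² ≤ ⟨∇f(x^{t−1}), x*⟩ + (Lη/2)‖x* − x^{t−1}‖². Then for every t ≥ 0, f(x^t) − f(x*) ≤ (1 − μ/(4L))^t (f(x^0) − f(x*)). -/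
open RealInnerProductSpace

theorem stmt_1 {d : ℕ} (f : EuclideanSpace ℝ (Fin d) → ℝ)
    (f' : EuclideanSpace ℝ (Fin d) → EuclideanSpace ℝ (Fin d))
    (μ L τ : ℝ) (hμ : 0 < μ) (hμL : μ ≤ L)
    (hdiff : ∀ x, HasGradientAt f (f' x) x)
    (hsc : ∀ u v, f u + ⟪f' u, v - u⟫ + μ / 2 * ‖v - u‖ ^ 2 ≤ f v)
    (hsm : ∀ u v, f v ≤ f u + ⟪f' u, v - u⟫ + L / 2 * ‖v - u‖ ^ 2)
    (xstar : EuclideanSpace ℝ (Fin d))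
    (hxstar : ∑ i, |xstar i| ≤ τ)
    (hmin : ∀ x : EuclideanSpace ℝ (Fin d), (∑ i, |x i| ≤ τ) → f xstar ≤ f x)
    (η : ℝ) (hη : η = μ / (2 * L))
    (x xtil : ℕ → EuclideanSpace ℝ (Fin d))
    (hx0 : ∑ i, |x 0 i| ≤ τ)
    (hxtilmem : ∀ t : ℕ, 1 ≤ t → ∑ i, |xtil t i| ≤ τ)
    (hxtil : ∀ t : ℕ, 1 ≤ t →
      ⟪f' (x (t - 1)), xtil t⟫ + L * η / 2 * ‖xtil t - x (t - 1)‖ ^ 2 ≤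
        ⟪f' (x (t - 1)), xstar⟫ + L * η / 2 * ‖xstar - x (t - 1)‖ ^ 2)
    (hupd : ∀ t : ℕ, 1 ≤ t → x t = (1 - η) • x (t - 1) + η • xtil t) :
    ∀ t : ℕ, f (x t) - f xstar ≤ (1 - μ / (4 * L)) ^ t * (f (x 0) - f xstar) := by
  have hL : (0:ℝ) < L := lt_of_lt_of_le hμ hμL
  have hη0 : 0 < η := by rw [hη]; positivity
  have hη1 : η ≤ 1 := by
    rw [hη, div_le_one (by positivity)]; linarith
  have hLη : L * η = μ / 2 := by rw [hη]; field_simp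
  have hc : μ / (4 * L) = η / 2 := by rw [hη]; ring
  -- feasibility of x t for all t
  have hfeas : ∀ t, ∑ i, |x t i| ≤ τ := by
    intro t
    induction t with
    | zero => exact hx0
    | succ n ih =>
      have h1 : (1:ℕ) ≤ n + 1 := Nat.le_add_left 1 n
      rw [hupd (n+1) h1]
      simp only [Nat.add_sub_cancel]
      calc ∑ i, |((1 - η) • x n + η • xtil (n+1)) i|
          ≤ ∑ i, ((1-η) * |x n i| + η * |xtil (n+1) i|) := by
            apply Finset.sum_le_sum
            intro i _
            simp only [PiLp.add_apply, PiLp.smul_apply, smul_eq_mul]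
            calc |(1-η) * x n i + η * xtil (n+1) i|
                ≤ |(1-η) * x n i| + |η * xtil (n+1) i| := abs_add_le _ _
              _ = (1-η)*|x n i| + η*|xtil (n+1) i| := by
                  rw [abs_mul, abs_mul, abs_of_nonneg (by linarith : (0:ℝ) ≤ 1 - η),
                    abs_of_nonneg hη0.le]
        _ = (1-η) * (∑ i, |x n i|) + η * (∑ i, |xtil (n+1) i|) := by
            rw [Finset.sum_add_distrib, Finset.mul_sum, Finset.mul_sum]
        _ ≤ (1-η)*τ + η*τ := by
            have h2 := hxtilmem (n+1) h1
            nlinarith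
        _ = τ := by ring
  -- per-step contraction
  have hstep : ∀ n : ℕ, f (x (n+1)) - f xstar ≤ (1 - μ/(4*L)) * (f (x n) - f xstar) := by
    intro n
    have h1 : (1:ℕ) ≤ n + 1 := Nat.le_add_left 1 n
    have hupd' := hupd (n+1) h1
    have hxtil' := hxtil (n+1) h1
    simp only [Nat.add_sub_cancel] at hupd' hxtil'
    set xp := x n with hxp
    set xt := xtil (n+1) with hxt
    have hdiffxt : x (n+1) - xp = η • (xt - xp) := by
      rw [hupd']; module
    have hA := hsm xp (x (n+1))
    rw [hdiffxt, real_inner_smul_right, norm_smul, Real.norm_eq_abs,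
      abs_of_pos hη0] at hA
    -- hA : f (x (n+1)) ≤ f xp + η * ⟪f' xp, xt - xp⟫ + L/2 * (η*‖xt-xp‖)^2
    have hA2 : f (x (n+1)) ≤ f xp + η * ⟪f' xp, xt - xp⟫ + μ*η/4 * ‖xt - xp‖^2 := by
      have e : L/2 * (η*‖xt - xp‖)^2 = μ*η/4 * ‖xt - xp‖^2 := by
        linear_combination (η * ‖xt - xp‖^2 / 2) * hLη
      linarith [hA, e.le, e.ge]
    have hC := hsc xp xstar
    have hD : f xstar ≤ f xp := hmin xp (hfeas n)
    rw [hLη] at hxtil'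
    have hBr : ⟪f' xp, xt - xp⟫ + μ/4 * ‖xt - xp‖^2 ≤
        ⟪f' xp, xstar - xp⟫ + μ/4 * ‖xstar - xp‖^2 := by
      rw [inner_sub_right, inner_sub_right]
      linarith
    have hB' := mul_le_mul_of_nonneg_left hBr hη0.le
    have hC' := mul_le_mul_of_nonneg_left hC hη0.le
    have hs : (0:ℝ) ≤ ‖xstar - xp‖^2 := by positivity
    have hs' : 0 ≤ μ*η/4 * ‖xstar - xp‖^2 := by positivity
    have hD' : 0 ≤ (η/2) * (f xp - f xstar) := by
      apply mul_nonneg (by linarith) (by linarith)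
    rw [hc]
    nlinarith [hA2, hB', hC', hs', hD']
  intro t
  induction t with
  | zero => simp
  | succ n ih =>
    have h0 : (0:ℝ) ≤ 1 - μ/(4*L) := by
      have : μ/(4*L) ≤ 1 := by rw [div_le_one (by positivity)]; linarith
      linarith
    calc f (x (n+1)) - f xstar ≤ (1 - μ/(4*L)) * (f (x n) - f xstar) := hstep n
      _ ≤ (1 - μ/(4*L)) * ((1 - μ/(4*L))^n * (f (x 0) - f xstar)) :=
          mul_le_mul_of_nonneg_left ih h0
      _ = (1 - μ/(4*L))^(n+1) * (f (x 0) - f xstar) := by ring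
end

section
/- Let f : ℝ^d → ℝ be differentiable, μ-strongly convex and L-smooth with 0 < μ ≤ L, let x̄ be a minimizer of f over the ℓ1 ball B_τ = {x : ‖x‖₁ ≤ τ}, and let 0 < η ≤ μ/(2L). Let x ∈ B_τ and let x̃ ∈ ℝ^d satisfy ⟨∇f(x), x̃⟩ + (Lη/2)‖x̃ − x‖² ≤ ⟨∇f(x), x̄⟩ + (Lη/2)‖x̄ − x‖². Then x⁺ = (1 − η)x + η x̃ satisfies f(x⁺) − f(x̄) ≤ (1 − η/2)(f(x) − f(x̄)). -/
open RealInnerProductSpace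

theorem stmt_2 {d : ℕ} (f : EuclideanSpace ℝ (Fin d) → ℝ)
    (f' : EuclideanSpace ℝ (Fin d) → EuclideanSpace ℝ (Fin d))
    (μ L τ : ℝ) (hμ : 0 < μ) (hμL : μ ≤ L)
    (hdiff : ∀ x, HasGradientAt f (f' x) x)
    (hsc : ∀ u v, f u + ⟪f' u, v - u⟫ + μ / 2 * ‖v - u‖ ^ 2 ≤ f v)
    (hsm : ∀ u v, f v ≤ f u + ⟪f' u, v - u⟫ + L / 2 * ‖v - u‖ ^ 2)
    (xbar : EuclideanSpace ℝ (Fin d))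
    (hxbar : ∑ i, |xbar i| ≤ τ)
    (hmin : ∀ x : EuclideanSpace ℝ (Fin d), (∑ i, |x i| ≤ τ) → f xbar ≤ f x)
    (η : ℝ) (hη0 : 0 < η) (hη1 : η ≤ μ / (2 * L))
    (x : EuclideanSpace ℝ (Fin d)) (hx : ∑ i, |x i| ≤ τ)
    (xtil : EuclideanSpace ℝ (Fin d))
    (hxt : ⟪f' x, xtil⟫ + L * η / 2 * ‖xtil - x‖ ^ 2 ≤
      ⟪f' x, xbar⟫ + L * η / 2 * ‖xbar - x‖ ^ 2) :
    f ((1 - η) • x + η • xtil) - f xbar ≤ (1 - η / 2) * (f x - f xbar) := by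
  have hL : 0 < L := hμ.trans_le hμL
  have hLη : L * η ≤ μ / 2 := by
    have h := (le_div_iff₀ (by positivity : (0:ℝ) < 2 * L)).mp hη1
    nlinarith
  set xp := (1 - η) • x + η • xtil with hxpdef
  have hxp : xp - x = η • (xtil - x) := by
    rw [hxpdef]; module
  have h1 : f xp ≤ f x + η * ⟪f' x, xtil - x⟫ + L / 2 * (η ^ 2 * ‖xtil - x‖ ^ 2) := by
    have := hsm x xp
    rw [hxp, real_inner_smul_right, norm_smul, Real.norm_eq_abs,
      abs_of_pos hη0, mul_pow] at this
    linarith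
  have hxt' : ⟪f' x, xtil - x⟫ + L * η / 2 * ‖xtil - x‖ ^ 2 ≤
      ⟪f' x, xbar - x⟫ + L * η / 2 * ‖xbar - x‖ ^ 2 := by
    rw [inner_sub_right, inner_sub_right]; linarith
  have h2 := hsc x xbar
  have h3 := hmin x hx
  have hb : (0:ℝ) ≤ ‖xbar - x‖ ^ 2 := sq_nonneg _
  nlinarith [mul_le_mul_of_nonneg_left hxt' hη0.le,
    mul_le_mul_of_nonneg_left hLη (mul_nonneg hη0.le hb),
    mul_nonneg (mul_nonneg hη0.le hμ.le) hb, sq_nonneg η]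
end

section
/- Let w, w̄ ∈ ℝ^n, let 1 ≤ k ≤ n, and let I ⊆ {1,…,n} with |I| = k be such that Σ_{i∈I} w_i² ≥ Σ_{i∈J} w_i² for every J ⊆ {1,…,n} with |J| = k. Then Σ_{i∈I} w_i² ≥ (k/(2n))‖w̄‖² − ‖w̄ − w‖². -/
theorem stmt_5 {n : ℕ} (w wbar : Fin n → ℝ) (k : ℕ) (hk1 : 1 ≤ k) (hkn : k ≤ n)
    (I : Finset (Fin n)) (hI : I.card = k)
    (hgreedy : ∀ J : Finset (Fin n), J.card = k →
      ∑ i ∈ J, w i ^ 2 ≤ ∑ i ∈ I, w i ^ 2) :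
    (k / (2 * n) : ℝ) * ∑ i, wbar i ^ 2 - ∑ i, (wbar i - w i) ^ 2 ≤
      ∑ i ∈ I, w i ^ 2 := by
  have hn : 0 < n := lt_of_lt_of_le hk1 hkn
  set Sin := ∑ i ∈ I, w i ^ 2 with hSin
  set Sout := ∑ i ∈ Iᶜ, w i ^ 2 with hSout
  have hswap : ∀ i ∈ I, ∀ j ∈ Iᶜ, w j ^ 2 ≤ w i ^ 2 := by
    intro i hi j hj
    rw [Finset.mem_compl] at hj
    have hji : j ∉ I.erase i := fun h => hj (Finset.mem_of_mem_erase h)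
    have hcard : (insert j (I.erase i)).card = k := by
      rw [Finset.card_insert_of_notMem hji, Finset.card_erase_of_mem hi, hI]
      omega
    have h := hgreedy _ hcard
    rw [Finset.sum_insert hji, Finset.sum_erase_eq_sub hi] at h
    linarith
  have hcompl : Iᶜ.card = n - k := by
    rw [Finset.card_compl, hI]; simp
  have key : (k : ℝ) * Sout ≤ ((n : ℝ) - k) * Sin := by
    calc (k:ℝ) * Sout = ∑ _i ∈ I, Sout := by
          rw [Finset.sum_const, hI, nsmul_eq_mul]
      _ ≤ ∑ i ∈ I, ∑ j ∈ Iᶜ, w i ^ 2 :=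
          Finset.sum_le_sum fun i hi => Finset.sum_le_sum fun j hj => hswap i hi j hj
      _ = ∑ i ∈ I, ((n : ℝ) - k) * w i ^ 2 := by
          refine Finset.sum_congr rfl fun i _ => ?_
          rw [Finset.sum_const, hcompl, nsmul_eq_mul, Nat.cast_sub hkn]
      _ = ((n : ℝ) - k) * Sin := by rw [← Finset.mul_sum]
  have htot : Sin + Sout = ∑ i, w i ^ 2 := Finset.sum_add_sum_compl I _
  have key2 : (k : ℝ) * ∑ i, w i ^ 2 ≤ (n : ℝ) * Sin := by
    rw [← htot]; nlinarith [key]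
  have hSbar : ∑ i, wbar i ^ 2 ≤ 2 * ∑ i, w i ^ 2 + 2 * ∑ i, (wbar i - w i) ^ 2 := by
    rw [Finset.mul_sum, Finset.mul_sum, ← Finset.sum_add_distrib]
    refine Finset.sum_le_sum fun i _ => ?_
    nlinarith [sq_nonneg (2 * w i - wbar i)]
  have hSdiff : (0:ℝ) ≤ ∑ i, (wbar i - w i) ^ 2 :=
    Finset.sum_nonneg fun i _ => sq_nonneg _
  have h2n : (0:ℝ) < 2 * n := by positivity
  have hknR : (k : ℝ) ≤ n := by exact_mod_cast hkn
  have hkR : (0 : ℝ) ≤ k := by positivity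
  rw [div_mul_eq_mul_div, sub_le_iff_le_add, div_le_iff₀ h2n]
  nlinarith [mul_le_mul_of_nonneg_left hSbar hkR,
    mul_nonneg (sub_nonneg.2 hknR) hSdiff, key2]
end

section
/- Let A be a real n×d matrix whose rows a_1,…,a_n satisfy ‖a_i‖² ≤ R. Let D : ℝ^n → ℝ be differentiable with −D (1/β)-strongly convex (β > 0), and suppose D attains its maximum value D*. Let y ∈ ℝ^n, x, x̄ ∈ ℝ^d and g ∈ ℝ^n satisfy ∇D(y) = (1/n)A x̄ − g. Set w = (1/n)A x − g, and let I ⊆ {1,…,n} with |I| = k (1 ≤ k ≤ n) be such that Σ_{i∈I} w_i² ≥ Σ_{i∈J} w_i² for every J with |J| = k. Then Σ_{i∈I} w_i² ≥ (k/(nβ))(D* − D(y)) − (kR/n²)‖x̄ − x‖². -/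
/-!
Strong concavity of `D` gives the Polyak–Łojasiewicz inequality `D* - D y ≤ (β/2) ‖∇D(y)‖²`.
Coordinatewise `∇D(y) = w + e` with `e_i = ⟨a_i, x̄ - x⟩ / n`, so `‖∇D(y)‖² ≤ 2‖w‖² + 2‖e‖²`,
and Cauchy–Schwarz with `‖a_i‖² ≤ R` gives `‖e‖² ≤ R ‖x̄ - x‖² / n`. Finally, a top-`k` set
of `n` numbers carries at least the fraction `k / n` of their sum.
-/

open RealInnerProductSpace Finset

section TopSum

variable {ι M : Type*} [AddCommMonoid M] [PartialOrder M] [IsOrderedCancelAddMonoid M]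
  {f : ι → M} {I : Finset ι}

lemma le_of_forall_card_eq_sum_le [DecidableEq ι]
    (hI : ∀ J : Finset ι, #J = #I → ∑ j ∈ J, f j ≤ ∑ i ∈ I, f i)
    {i j : ι} (hi : i ∈ I) (hj : j ∉ I) : f j ≤ f i := by
  have hj' : j ∉ I.erase i := fun h => hj (mem_of_mem_erase h)
  have hswap := hI (insert j (I.erase i)) (by
    rw [card_insert_of_notMem hj', card_erase_add_one hi])
  rw [sum_insert hj', ← add_sum_erase I f hi] at hswap
  exact le_of_add_le_add_right hswap

lemma card_nsmul_sum_le_of_forall_card_eq_sum_le [Fintype ι]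
    (hI : ∀ J : Finset ι, #J = #I → ∑ j ∈ J, f j ≤ ∑ i ∈ I, f i) :
    #I • ∑ i, f i ≤ Fintype.card ι • ∑ i ∈ I, f i := by
  classical
  have hcompl : ∀ j ∈ Iᶜ, #I • f j ≤ ∑ i ∈ I, f i := fun j hj => by
    rw [← sum_const]
    exact sum_le_sum fun i hi => le_of_forall_card_eq_sum_le hI hi (mem_compl.mp hj)
  calc #I • ∑ i, f i = #I • ∑ i ∈ I, f i + ∑ j ∈ Iᶜ, #I • f j := by
        rw [← sum_add_sum_compl I f, nsmul_add, ← smul_sum]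
    _ ≤ #I • ∑ i ∈ I, f i + #Iᶜ • ∑ i ∈ I, f i := by
        gcongr
        exact sum_le_card_nsmul _ _ _ hcompl
    _ = Fintype.card ι • ∑ i ∈ I, f i := by
        rw [← add_nsmul, card_add_card_compl]

end TopSum

lemma sub_le_mul_norm_sq_of_strongly_concave {E : Type*} [NormedAddCommGroup E]
    [InnerProductSpace ℝ E] {D : E → ℝ} {G y v : E} {β : ℝ} (hβ : 0 < β)
    (hD : -D y + ⟪-G, v - y⟫ + (1 / β) / 2 * ‖v - y‖ ^ 2 ≤ -D v) :
    D v - D y ≤ β / 2 * ‖G‖ ^ 2 := by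
  rw [inner_neg_left] at hD
  have hcs : ⟪G, v - y⟫ ≤ ‖G‖ * ‖v - y‖ := real_inner_le_norm _ _
  have hyoung : β / 2 * ‖G‖ ^ 2 - (‖G‖ * ‖v - y‖ - (1 / β) / 2 * ‖v - y‖ ^ 2) =
      β / 2 * (‖G‖ - ‖v - y‖ / β) ^ 2 := by
    field_simp
    ring
  have hsq : 0 ≤ β / 2 * (‖G‖ - ‖v - y‖ / β) ^ 2 := by positivity
  linarith

lemma EuclideanSpace.norm_sq_le_of_apply_eq_add {ι : Type*} [Fintype ι]
    {u : EuclideanSpace ℝ ι} {w e : ι → ℝ} (h : ∀ i, u i = w i + e i) :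
    ‖u‖ ^ 2 ≤ 2 * ∑ i, w i ^ 2 + 2 * ∑ i, e i ^ 2 := by
  rw [EuclideanSpace.real_norm_sq_eq, mul_sum, mul_sum, ← sum_add_distrib]
  exact sum_le_sum fun i _ => by rw [h i, ← mul_add]; exact add_sq_le

lemma sum_inner_sq_le {ι E : Type*} [Fintype ι] [NormedAddCommGroup E] [InnerProductSpace ℝ E]
    {a : ι → E} {R : ℝ} (hR : ∀ i, ‖a i‖ ^ 2 ≤ R) (z : E) :
    ∑ i, ⟪a i, z⟫ ^ 2 ≤ Fintype.card ι * (R * ‖z‖ ^ 2) := by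
  rw [← nsmul_eq_mul]
  refine sum_le_card_nsmul _ _ _ fun i _ => ?_
  calc ⟪a i, z⟫ ^ 2 ≤ (‖a i‖ * ‖z‖) ^ 2 := by
        rw [← sq_abs]
        exact pow_le_pow_left₀ (abs_nonneg _) (abs_real_inner_le_norm _ _) 2
    _ ≤ R * ‖z‖ ^ 2 := by rw [mul_pow]; gcongr; exact hR i

theorem stmt_6_general {n d : ℕ} (a : Fin n → EuclideanSpace ℝ (Fin d)) (R : ℝ)
    (hR : ∀ i, ‖a i‖ ^ 2 ≤ R)
    (D : EuclideanSpace ℝ (Fin n) → ℝ)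
    (D' : EuclideanSpace ℝ (Fin n) → EuclideanSpace ℝ (Fin n))
    (β : ℝ) (hβ : 0 < β)
    (hDsc : ∀ u v, (-D u) + ⟪-D' u, v - u⟫ + (1 / β) / 2 * ‖v - u‖ ^ 2 ≤ -D v)
    (Dstar : ℝ) (hDatt : ∃ y, D y = Dstar)
    (y : EuclideanSpace ℝ (Fin n)) (x xbar : EuclideanSpace ℝ (Fin d))
    (g : Fin n → ℝ)
    (hgrad : ∀ i, D' y i = (1 / n : ℝ) * ⟪a i, xbar⟫ - g i)
    (w : Fin n → ℝ) (hw : ∀ i, w i = (1 / n : ℝ) * ⟪a i, x⟫ - g i)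
    (k : ℕ) (hk1 : 1 ≤ k) (hkn : k ≤ n)
    (I : Finset (Fin n)) (hI : I.card = k)
    (hgreedy : ∀ J : Finset (Fin n), J.card = k →
      ∑ i ∈ J, w i ^ 2 ≤ ∑ i ∈ I, w i ^ 2) :
    (k / (n * β) : ℝ) * (Dstar - D y) - (k * R / n ^ 2 : ℝ) * ‖xbar - x‖ ^ 2 ≤
      ∑ i ∈ I, w i ^ 2 := by
  obtain ⟨v, rfl⟩ := hDatt
  have hn : (0 : ℝ) < n := by exact_mod_cast hk1.trans hkn
  set e : Fin n → ℝ := fun i => (1 / n : ℝ) * ⟪a i, xbar - x⟫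
  have hPL := sub_le_mul_norm_sq_of_strongly_concave hβ (hDsc y v)
  have hsplit : ‖D' y‖ ^ 2 ≤ 2 * ∑ i, w i ^ 2 + 2 * ∑ i, e i ^ 2 :=
    EuclideanSpace.norm_sq_le_of_apply_eq_add fun i => by
      simp only [e, hgrad, hw, inner_sub_right]; ring
  have he : ∑ i, e i ^ 2 ≤ R * ‖xbar - x‖ ^ 2 / n := calc
      ∑ i, e i ^ 2 = (1 / n : ℝ) ^ 2 * ∑ i, ⟪a i, xbar - x⟫ ^ 2 := by
        simp only [e, mul_pow, mul_sum]
      _ ≤ (1 / n : ℝ) ^ 2 * (n * (R * ‖xbar - x‖ ^ 2)) := by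
        gcongr
        simpa only [Fintype.card_fin] using sum_inner_sq_le hR (xbar - x)
      _ = R * ‖xbar - x‖ ^ 2 / n := by field_simp
  have htop : (k : ℝ) * ∑ i, w i ^ 2 ≤ n * ∑ i ∈ I, w i ^ 2 := by
    have := card_nsmul_sum_le_of_forall_card_eq_sum_le (f := fun i => w i ^ 2) (hI ▸ hgreedy)
    simpa only [hI, Fintype.card_fin, nsmul_eq_mul] using this
  have hS : (D v - D y) / β - R * ‖xbar - x‖ ^ 2 / n ≤ ∑ i, w i ^ 2 := by
    rw [sub_le_iff_le_add, div_le_iff₀ hβ]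
    nlinarith
  calc (k / (n * β) : ℝ) * (D v - D y) - (k * R / n ^ 2 : ℝ) * ‖xbar - x‖ ^ 2
      = k / n * ((D v - D y) / β - R * ‖xbar - x‖ ^ 2 / n) := by ring
    _ ≤ k / n * ∑ i, w i ^ 2 := by gcongr
    _ ≤ ∑ i ∈ I, w i ^ 2 := by rw [div_mul_eq_mul_div, div_le_iff₀ hn]; linarith

theorem stmt_6 {n d : ℕ} (a : Fin n → EuclideanSpace ℝ (Fin d)) (R : ℝ)
    (hR : ∀ i, ‖a i‖ ^ 2 ≤ R)
    (D : EuclideanSpace ℝ (Fin n) → ℝ)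
    (D' : EuclideanSpace ℝ (Fin n) → EuclideanSpace ℝ (Fin n))
    (β : ℝ) (hβ : 0 < β)
    (hDdiff : ∀ y, HasGradientAt D (D' y) y)
    (hDsc : ∀ u v, (-D u) + ⟪-D' u, v - u⟫ + (1 / β) / 2 * ‖v - u‖ ^ 2 ≤ -D v)
    (Dstar : ℝ) (hDub : ∀ y, D y ≤ Dstar) (hDatt : ∃ y, D y = Dstar)
    (y : EuclideanSpace ℝ (Fin n)) (x xbar : EuclideanSpace ℝ (Fin d))
    (g : Fin n → ℝ)
    (hgrad : ∀ i, D' y i = (1 / n : ℝ) * ⟪a i, xbar⟫ - g i)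
    (w : Fin n → ℝ) (hw : ∀ i, w i = (1 / n : ℝ) * ⟪a i, x⟫ - g i)
    (k : ℕ) (hk1 : 1 ≤ k) (hkn : k ≤ n)
    (I : Finset (Fin n)) (hI : I.card = k)
    (hgreedy : ∀ J : Finset (Fin n), J.card = k →
      ∑ i ∈ J, w i ^ 2 ≤ ∑ i ∈ I, w i ^ 2) :
    (k / (n * β) : ℝ) * (Dstar - D y) - (k * R / n ^ 2 : ℝ) * ‖xbar - x‖ ^ 2 ≤
      ∑ i ∈ I, w i ^ 2 :=
  stmt_6_general a R hR D D' β hβ hDsc Dstar hDatt y x xbar g hgrad w hw k hk1 hkn I hI hgreedy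
end

section
/- Let φ : ℝ^n → ℝ be differentiable and convex with (1/α)-Lipschitz gradient (α > 0), let c ∈ ℝ^n, δ > 0, and I ⊆ {1,…,n}. Suppose y, y⁺ ∈ ℝ^n satisfy y⁺_i = y_i for i ∉ I and y⁺_i − y_i = δ(c_i − (∇φ(y⁺))_i) for i ∈ I. Then (⟨c, y⁺⟩ − φ(y⁺)) − (⟨c, y⟩ − φ(y)) ≤ (1/δ + 1/(2α))‖y⁺ − y‖². -/
/-!
Apply the descent lemma at `y⁺` in the direction `y - y⁺`: it bounds
`φ y - φ y⁺ + ⟪∇φ y⁺, y⁺ - y⟫` by `‖y⁺ - y‖² / (2α)`. The update rule gives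
`δ (c - ∇φ y⁺)ᵢ (y⁺ - y)ᵢ = (y⁺ - y)ᵢ²` in every coordinate (off `I` both sides vanish), so
`⟪c - ∇φ y⁺, y⁺ - y⟫ = ‖y⁺ - y‖² / δ`. Adding the two gives the claim.
-/

open RealInnerProductSpace

section Descent

variable {F : Type*} [NormedAddCommGroup F] [InnerProductSpace ℝ F] {φ : F → ℝ} {φ' : F → F}

theorem HasGradientAt.hasDerivAt_comp_add_smul [CompleteSpace F] {u d : F} {t : ℝ}
    (h : HasGradientAt φ (φ' (u + t • d)) (u + t • d)) :
    HasDerivAt (fun s : ℝ => φ (u + s • d)) ⟪φ' (u + t • d), d⟫ t := by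
  have hline : HasDerivAt (fun s : ℝ => u + s • d) d t := by
    simpa using ((hasDerivAt_id t).smul_const d).const_add u
  simpa [InnerProductSpace.toDual_apply_apply, Function.comp_def] using
    h.hasFDerivAt.comp_hasDerivAt t hline

theorem inner_sub_inner_le_of_lipschitz {L : ℝ} (hlip : ∀ u v, ‖φ' u - φ' v‖ ≤ L * ‖u - v‖)
    (u d : F) {t : ℝ} (ht : 0 ≤ t) :
    ⟪φ' (u + t • d), d⟫ - ⟪φ' u, d⟫ ≤ L * t * ‖d‖ ^ 2 :=
  calc ⟪φ' (u + t • d), d⟫ - ⟪φ' u, d⟫ = ⟪φ' (u + t • d) - φ' u, d⟫ := (inner_sub_left ..).symm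
    _ ≤ ‖φ' (u + t • d) - φ' u‖ * ‖d‖ := real_inner_le_norm _ _
    _ ≤ L * ‖(u + t • d) - u‖ * ‖d‖ := by gcongr; exact hlip _ _
    _ = L * t * ‖d‖ ^ 2 := by
      rw [add_sub_cancel_left, norm_smul, Real.norm_of_nonneg ht]; ring

theorem le_add_inner_add_of_lipschitz_gradient [CompleteSpace F] {L : ℝ}
    (hdiff : ∀ x, HasGradientAt φ (φ' x) x)
    (hlip : ∀ u v, ‖φ' u - φ' v‖ ≤ L * ‖u - v‖) (u v : F) :
    φ v ≤ φ u + ⟪φ' u, v - u⟫ + L / 2 * ‖v - u‖ ^ 2 := by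
  set d := v - u
  have hf : ∀ t : ℝ, HasDerivAt (fun s : ℝ => φ (u + s • d)) ⟪φ' (u + t • d), d⟫ t :=
    fun t => (hdiff _).hasDerivAt_comp_add_smul
  have hB : ∀ t : ℝ, HasDerivAt (fun s : ℝ => φ u + s * ⟪φ' u, d⟫ + L / 2 * ‖d‖ ^ 2 * s ^ 2)
      (⟪φ' u, d⟫ + L * t * ‖d‖ ^ 2) t := fun t =>
    (((hasDerivAt_id' t).mul_const _).const_add _).add
      ((hasDerivAt_pow 2 t).const_mul _) |>.congr_deriv (by norm_num; ring)
  have hcompare := image_le_of_deriv_right_le_deriv_boundary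
    (fun t _ => (hf t).continuousAt.continuousWithinAt) (fun t _ => (hf t).hasDerivWithinAt)
    (by simp) (fun t _ => (hB t).continuousAt.continuousWithinAt)
    (fun t _ => (hB t).hasDerivWithinAt)
    (fun t ht => by linarith [inner_sub_inner_le_of_lipschitz hlip u d ht.1])
    (Set.right_mem_Icc.2 zero_le_one)
  simpa [d] using hcompare

end Descent

theorem mul_inner_eq_norm_sq_of_forall_eq_zero_or {ι : Type*} [Fintype ι]
    {g d : EuclideanSpace ℝ ι} {δ : ℝ} (h : ∀ i, d i = 0 ∨ d i = δ * g i) :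
    δ * ⟪g, d⟫ = ‖d‖ ^ 2 := by
  rw [← real_inner_self_eq_norm_sq, PiLp.inner_apply, PiLp.inner_apply, Finset.mul_sum]
  refine Finset.sum_congr rfl fun i _ => ?_
  simp only [RCLike.inner_apply, conj_trivial]
  rcases h i with hi | hi <;> rw [hi] <;> ring

theorem stmt_7_general {n : ℕ} (φ : EuclideanSpace ℝ (Fin n) → ℝ)
    (φ' : EuclideanSpace ℝ (Fin n) → EuclideanSpace ℝ (Fin n))
    (α : ℝ)
    (hdiff : ∀ y, HasGradientAt φ (φ' y) y)
    (hlip : ∀ u v, ‖φ' u - φ' v‖ ≤ (1 / α) * ‖u - v‖)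
    (c : EuclideanSpace ℝ (Fin n)) (δ : ℝ) (hδ : 0 < δ)
    (I : Finset (Fin n)) (y yplus : EuclideanSpace ℝ (Fin n))
    (hout : ∀ i ∉ I, yplus i = y i)
    (hin : ∀ i ∈ I, yplus i - y i = δ * (c i - φ' yplus i)) :
    (⟪c, yplus⟫ - φ yplus) - (⟪c, y⟫ - φ y) ≤
      (1 / δ + 1 / (2 * α)) * ‖yplus - y‖ ^ 2 := by
  have hstep : δ * ⟪c - φ' yplus, yplus - y⟫ = ‖yplus - y‖ ^ 2 := by
    refine mul_inner_eq_norm_sq_of_forall_eq_zero_or fun i => ?_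
    by_cases hi : i ∈ I
    · exact .inr (hin i hi)
    · exact .inl (sub_eq_zero.2 (hout i hi))
  have hdesc := le_add_inner_add_of_lipschitz_gradient hdiff hlip yplus y
  rw [← neg_sub yplus y, inner_neg_right, norm_neg] at hdesc
  calc (⟪c, yplus⟫ - φ yplus) - (⟪c, y⟫ - φ y)
      = ⟪c - φ' yplus, yplus - y⟫ + (φ y - φ yplus + ⟪φ' yplus, yplus - y⟫) := by
        rw [inner_sub_left, inner_sub_right, inner_sub_right]; ring
    _ ≤ ‖yplus - y‖ ^ 2 / δ + 1 / α / 2 * ‖yplus - y‖ ^ 2 := by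
        gcongr
        · exact (eq_div_of_mul_eq hδ.ne' (by rw [mul_comm, hstep])).le
        · linarith
    _ = (1 / δ + 1 / (2 * α)) * ‖yplus - y‖ ^ 2 := by ring

theorem stmt_7 {n : ℕ} (φ : EuclideanSpace ℝ (Fin n) → ℝ)
    (φ' : EuclideanSpace ℝ (Fin n) → EuclideanSpace ℝ (Fin n))
    (α : ℝ) (hα : 0 < α)
    (hdiff : ∀ y, HasGradientAt φ (φ' y) y)
    (hconv : ConvexOn ℝ Set.univ φ)
    (hlip : ∀ u v, ‖φ' u - φ' v‖ ≤ (1 / α) * ‖u - v‖)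
    (c : EuclideanSpace ℝ (Fin n)) (δ : ℝ) (hδ : 0 < δ)
    (I : Finset (Fin n)) (y yplus : EuclideanSpace ℝ (Fin n))
    (hout : ∀ i ∉ I, yplus i = y i)
    (hin : ∀ i ∈ I, yplus i - y i = δ * (c i - φ' yplus i)) :
    (⟪c, yplus⟫ - φ yplus) - (⟪c, y⟫ - φ y) ≤
      (1 / δ + 1 / (2 * α)) * ‖yplus - y‖ ^ 2 :=
  stmt_7_general φ φ' α hdiff hlip c δ hδ I y yplus hout hin
end

section
/- Let A be a real n×d matrix and let D : ℝ^n → ℝ be differentiable with −D (1/β)-strongly convex (β > 0). Let x, x̄ ∈ ℝ^d, g ∈ ℝ^n, δ > 0, I ⊆ {1,…,n}, and let y, y⁺ ∈ ℝ^n satisfy: y⁺_i = y_i for i ∉ I; y⁺_i − y_i = δ((1/n)(A x)_i − g_i) for i ∈ I; and ∇D(y⁺) = (1/n)A x̄ − g. Then D(y) − D(y⁺) ≤ −⟨(1/n)A(x̄ − x), y⁺ − y⟩ − (1/δ + 1/(2β))‖y⁺ − y‖². -/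
/-!
Strong concavity of `D`, applied at `y⁺` in the direction of `y`, bounds `D y - D y⁺` by
`⟪∇D(y⁺), y - y⁺⟫ - ‖y⁺ - y‖² / (2β)`. Coordinatewise, `∇D(y⁺)ᵢ` is
`(1/n)⟪aᵢ, x̄ - x⟫ + (y⁺ᵢ - yᵢ)/δ` wherever `y⁺ᵢ ≠ yᵢ`, so the inner product splits into the
linear term of the claim and a further `-‖y⁺ - y‖² / δ`.
-/

open RealInnerProductSpace

lemma sub_le_inner_sub_of_neg_strongly_convex {E : Type*} [NormedAddCommGroup E]
    [InnerProductSpace ℝ E] {D : E → ℝ} {D' : E → E} {c : ℝ}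
    (hsc : ∀ u v, (-D u) + ⟪-D' u, v - u⟫ + c / 2 * ‖v - u‖ ^ 2 ≤ -D v) (u v : E) :
    D v - D u ≤ ⟪D' u, v - u⟫ - c / 2 * ‖v - u‖ ^ 2 := by
  have h := hsc u v
  rw [inner_neg_left] at h
  linarith

lemma neg_mul_eq_of_eq_zero_or_eq_mul {p q t δ : ℝ} (ht : t = 0 ∨ t = δ * q) :
    -(p * t) = -((p - q) * t) - t ^ 2 / δ := by
  rcases ht with rfl | rfl
  · simp
  · -- `(δ q)² / δ = δ q²` holds also at `δ = 0`
    rw [mul_pow, sq δ, mul_div_right_comm, mul_self_div_self]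
    ring

lemma real_inner_sub_eq_neg_sum {ι : Type*} [Fintype ι] (u y z : EuclideanSpace ℝ ι) :
    ⟪u, y - z⟫ = ∑ i, -(u i * (z i - y i)) := by
  rw [PiLp.inner_apply]
  refine Finset.sum_congr rfl fun i _ => ?_
  simp only [PiLp.sub_apply, RCLike.inner_apply, conj_trivial]
  ring

theorem stmt_8_general {n d : ℕ} (a : Fin n → EuclideanSpace ℝ (Fin d))
    (D : EuclideanSpace ℝ (Fin n) → ℝ)
    (D' : EuclideanSpace ℝ (Fin n) → EuclideanSpace ℝ (Fin n))
    (β : ℝ)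
    (hDsc : ∀ u v, (-D u) + ⟪-D' u, v - u⟫ + (1 / β) / 2 * ‖v - u‖ ^ 2 ≤ -D v)
    (x xbar : EuclideanSpace ℝ (Fin d)) (g : Fin n → ℝ)
    (δ : ℝ) (I : Finset (Fin n))
    (y yplus : EuclideanSpace ℝ (Fin n))
    (hout : ∀ i ∉ I, yplus i = y i)
    (hin : ∀ i ∈ I, yplus i - y i = δ * ((1 / n : ℝ) * ⟪a i, x⟫ - g i))
    (hgrad : ∀ i, D' yplus i = (1 / n : ℝ) * ⟪a i, xbar⟫ - g i) :
    D y - D yplus ≤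
      -(∑ i, (1 / n : ℝ) * ⟪a i, xbar - x⟫ * (yplus i - y i)) -
        (1 / δ + 1 / (2 * β)) * ‖yplus - y‖ ^ 2 := by
  have hconcave := sub_le_inner_sub_of_neg_strongly_convex hDsc yplus y
  have hcoord : ∀ i, -(D' yplus i * (yplus i - y i)) =
      -((1 / n : ℝ) * ⟪a i, xbar - x⟫ * (yplus i - y i)) - (yplus i - y i) ^ 2 / δ := by
    intro i
    have hstep : yplus i - y i = 0 ∨ yplus i - y i = δ * ((1 / n : ℝ) * ⟪a i, x⟫ - g i) := by
      by_cases hi : i ∈ I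
      · exact Or.inr (hin i hi)
      · exact Or.inl (sub_eq_zero.mpr (hout i hi))
    rw [hgrad, neg_mul_eq_of_eq_zero_or_eq_mul hstep, inner_sub_right]
    ring
  have hnorm : ‖yplus - y‖ ^ 2 = ∑ i, (yplus i - y i) ^ 2 := by
    simp only [EuclideanSpace.real_norm_sq_eq, PiLp.sub_apply]
  rw [real_inner_sub_eq_neg_sum, Finset.sum_congr rfl fun i _ => hcoord i, Finset.sum_sub_distrib,
    Finset.sum_neg_distrib, ← Finset.sum_div, ← hnorm, norm_sub_rev y yplus] at hconcave
  exact hconcave.trans_eq (by ring)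

theorem stmt_8 {n d : ℕ} (a : Fin n → EuclideanSpace ℝ (Fin d))
    (D : EuclideanSpace ℝ (Fin n) → ℝ)
    (D' : EuclideanSpace ℝ (Fin n) → EuclideanSpace ℝ (Fin n))
    (β : ℝ) (hβ : 0 < β)
    (hDdiff : ∀ y, HasGradientAt D (D' y) y)
    (hDsc : ∀ u v, (-D u) + ⟪-D' u, v - u⟫ + (1 / β) / 2 * ‖v - u‖ ^ 2 ≤ -D v)
    (x xbar : EuclideanSpace ℝ (Fin d)) (g : Fin n → ℝ)
    (δ : ℝ) (hδ : 0 < δ) (I : Finset (Fin n))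
    (y yplus : EuclideanSpace ℝ (Fin n))
    (hout : ∀ i ∉ I, yplus i = y i)
    (hin : ∀ i ∈ I, yplus i - y i = δ * ((1 / n : ℝ) * ⟪a i, x⟫ - g i))
    (hgrad : ∀ i, D' yplus i = (1 / n : ℝ) * ⟪a i, xbar⟫ - g i) :
    D y - D yplus ≤
      -(∑ i, (1 / n : ℝ) * ⟪a i, xbar - x⟫ * (yplus i - y i)) -
        (1 / δ + 1 / (2 * β)) * ‖yplus - y‖ ^ 2 :=
  stmt_8_general a D D' β hDsc x xbar g δ I y yplus hout hin hgrad
end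

section
/- Assume the primal–dual setup with 2α ≥ β. Let δ > 0, 1 ≤ k ≤ n, and let x^t, x^{t+1} ∈ ℝ^d, y^{t−1}, y^t ∈ ℝ^n and I ⊆ {1,…,n} with |I| = k satisfy: y^t_i = y^{t−1}_i for i ∉ I; y^t_i − y^{t−1}_i = δ((1/n)(A x^t)_i − (∇φ(y^t))_i) for i ∈ I; and ∇D(y^t) = (1/n)A x̄^t − ∇φ(y^t), where x̄^t ∈ C attains D(y^t) = L(x̄^t, y^t). Define Δ_d^t = D* − D(y^t), Δ_d^{t−1} = D* − D(y^{t−1}), Δ_p^t = L(x^{t+1}, y^t) − D(y^t), and Δ_p^{t−1} = L(x^t, y^{t−1}) − D(y^{t−1}). Then Δ_d^t − Δ_d^{t−1} + Δ_p^t − Δ_p^{t−1} ≤ (L(x^{t+1}, y^t) − L(x^t, y^t)) − (1/(2δ))‖y^t − y^{t−1}‖² + (2δRk/n²)‖x̄^t − x^t‖². -/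
/-!
Write `Δ = yᵗ - yᵗ⁻¹`; it is supported on `I`, where `Δᵢ = δ vᵢ` for
`v = (1/n) A xᵗ - ∇φ(yᵗ) = ∇_y L(xᵗ, yᵗ)`. The left-hand side minus `L(xᵗ⁺¹, yᵗ) - L(xᵗ, yᵗ)` is
`2 (D(yᵗ⁻¹) - D(yᵗ)) + L(xᵗ, yᵗ) - L(xᵗ, yᵗ⁻¹)`. Strong concavity of `D` bounds the first term by
`-2⟪∇D(yᵗ), Δ⟫ - ‖Δ‖²/β`, smoothness of `φ` bounds the second by `⟪v, Δ⟫ + ‖Δ‖²/(2α)`, and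
`β ≤ 2α` lets the quadratic terms go. Since `∇D(yᵗ) = v + r` with `r = (1/n) A (x̄ᵗ - xᵗ)` and
`⟪v, Δ⟫ = ‖Δ‖²/δ`, what remains is `-‖Δ‖²/δ - 2⟪r, Δ⟫`; Young's inequality bounds it by
`-‖Δ‖²/(2δ) + 2δ ∑_{i ∈ I} rᵢ²`, and Cauchy–Schwarz gives `∑_{i ∈ I} rᵢ² ≤ k R ‖x̄ᵗ - xᵗ‖² / n²`.
-/

open RealInnerProductSpace

theorem le_add_inner_add_half_mul_norm_sq_of_lipschitz_gradient
    {E : Type*} [NormedAddCommGroup E] [InnerProductSpace ℝ E] [CompleteSpace E]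
    {f : E → ℝ} {f' : E → E} {K : ℝ} (hf : ∀ x, HasGradientAt f (f' x) x)
    (hf' : ∀ x y, ‖f' x - f' y‖ ≤ K * ‖x - y‖) (u v : E) :
    f v ≤ f u + ⟪f' u, v - u⟫ + K / 2 * ‖v - u‖ ^ 2 := by
  set w := v - u
  set F : ℝ → ℝ := fun t => f (u + t • w) - t * ⟪f' u, w⟫ - K / 2 * t ^ 2 * ‖w‖ ^ 2
  have hF : ∀ t : ℝ, HasDerivAt F (⟪f' (u + t • w), w⟫ - ⟪f' u, w⟫ - K * t * ‖w‖ ^ 2) t := by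
    intro t
    have hline : HasDerivAt (fun t : ℝ => u + t • w) w t := by
      simpa using ((hasDerivAt_id t).smul_const w).const_add u
    have hcomp := (hf (u + t • w)).hasFDerivAt.comp_hasDerivAt t hline
    simp only [InnerProductSpace.toDual_apply_apply] at hcomp
    refine ((hcomp.sub ((hasDerivAt_id t).mul_const ⟪f' u, w⟫)).sub
      (((hasDerivAt_pow 2 t).const_mul (K / 2)).mul_const (‖w‖ ^ 2))).congr_deriv ?_
    simp only [Nat.cast_ofNat, one_mul, Nat.add_one_sub_one, pow_one]
    ring
  have hF_nonpos : ∀ t ∈ interior (Set.Icc (0 : ℝ) 1), deriv F t ≤ 0 := by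
    intro t ht
    rw [interior_Icc] at ht
    have hlip : ‖f' (u + t • w) - f' u‖ ≤ K * (t * ‖w‖) := by
      simpa [norm_smul, abs_of_pos ht.1] using hf' (u + t • w) u
    calc deriv F t = ⟪f' (u + t • w) - f' u, w⟫ - K * t * ‖w‖ ^ 2 := by
          rw [(hF t).deriv, inner_sub_left]
      _ ≤ ‖f' (u + t • w) - f' u‖ * ‖w‖ - K * t * ‖w‖ ^ 2 := by
          gcongr; exact real_inner_le_norm _ _
      _ ≤ K * (t * ‖w‖) * ‖w‖ - K * t * ‖w‖ ^ 2 := by gcongr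
      _ = 0 := by ring
  have hanti : AntitoneOn F (Set.Icc 0 1) :=
    antitoneOn_of_deriv_nonpos (convex_Icc 0 1)
      (fun t _ => (hF t).continuousAt.continuousWithinAt)
      (fun t _ => (hF t).differentiableAt.differentiableWithinAt) hF_nonpos
  have h01 : F 1 ≤ F 0 := hanti (by simp) (by simp) zero_le_one
  simp [F, w] at h01
  linarith

theorem le_sub_inner_sub_half_mul_norm_sq_of_strongConvex_neg
    {E : Type*} [NormedAddCommGroup E] [InnerProductSpace ℝ E] {D : E → ℝ} {D' : E → E} {c : ℝ}
    (hD : ∀ u v, -D u + ⟪-D' u, v - u⟫ + c / 2 * ‖v - u‖ ^ 2 ≤ -D v) (u v : E) :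
    D v ≤ D u - ⟪D' u, u - v⟫ - c / 2 * ‖u - v‖ ^ 2 := by
  have h := hD u v
  rw [← neg_sub u v, inner_neg_neg, norm_neg] at h
  linarith

theorem EuclideanSpace.inner_eq_sum_of_eq_zero_off {ι : Type*} [Fintype ι] {I : Finset ι}
    {w : EuclideanSpace ℝ ι} (hw : ∀ i ∉ I, w i = 0) (z : EuclideanSpace ℝ ι) :
    ⟪z, w⟫ = ∑ i ∈ I, z i * w i := by
  rw [PiLp.inner_apply, ← Finset.sum_subset I.subset_univ fun i _ hi => by simp [hw i hi]]
  simp [mul_comm]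

theorem EuclideanSpace.norm_sq_eq_sum_of_eq_zero_off {ι : Type*} [Fintype ι] {I : Finset ι}
    {w : EuclideanSpace ℝ ι} (hw : ∀ i ∉ I, w i = 0) : ‖w‖ ^ 2 = ∑ i ∈ I, w i ^ 2 := by
  rw [← real_inner_self_eq_norm_sq, EuclideanSpace.inner_eq_sum_of_eq_zero_off hw w]
  simp only [sq]

theorem sum_sq_inner_le_card_mul {ι E : Type*} [SeminormedAddCommGroup E] [InnerProductSpace ℝ E]
    (I : Finset ι) {a : ι → E} {R : ℝ} (hR : ∀ i ∈ I, ‖a i‖ ^ 2 ≤ R) (x : E) :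
    ∑ i ∈ I, ⟪a i, x⟫ ^ 2 ≤ I.card * R * ‖x‖ ^ 2 := by
  have hterm : ∀ i ∈ I, ⟪a i, x⟫ ^ 2 ≤ R * ‖x‖ ^ 2 := fun i hi =>
    calc ⟪a i, x⟫ ^ 2 = |⟪a i, x⟫| ^ 2 := (sq_abs _).symm
      _ ≤ (‖a i‖ * ‖x‖) ^ 2 := by gcongr; exact abs_real_inner_le_norm _ _
      _ = ‖a i‖ ^ 2 * ‖x‖ ^ 2 := mul_pow _ _ _
      _ ≤ R * ‖x‖ ^ 2 := by gcongr; exact hR i hi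
  calc ∑ i ∈ I, ⟪a i, x⟫ ^ 2 ≤ I.card • (R * ‖x‖ ^ 2) := Finset.sum_le_card_nsmul I _ _ hterm
    _ = I.card * R * ‖x‖ ^ 2 := by rw [nsmul_eq_mul, mul_assoc]

theorem neg_two_mul_add_mul_le_of_eq_mul {δ p q Δ : ℝ} (hδ : 0 < δ) (hΔ : Δ = δ * p) :
    -2 * ((p + q) * Δ) + p * Δ ≤ -(1 / (2 * δ)) * Δ ^ 2 + 2 * δ * q ^ 2 := by
  subst hΔ
  have hsq : 1 / (2 * δ) * (δ * p) ^ 2 = δ / 2 * p ^ 2 := by field_simp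
  linarith [mul_nonneg hδ.le (sq_nonneg (p + 2 * q))]

theorem lagrangian_sub_le {n d : ℕ} (a : Fin n → EuclideanSpace ℝ (Fin d))
    (g : EuclideanSpace ℝ (Fin d) → ℝ) {φ : EuclideanSpace ℝ (Fin n) → ℝ}
    {φ' : EuclideanSpace ℝ (Fin n) → EuclideanSpace ℝ (Fin n)} {α : ℝ}
    (hφdiff : ∀ y, HasGradientAt φ (φ' y) y) (hφlip : ∀ u v, ‖φ' u - φ' v‖ ≤ (1 / α) * ‖u - v‖)
    {Lag : EuclideanSpace ℝ (Fin d) → EuclideanSpace ℝ (Fin n) → ℝ}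
    (hLag : ∀ x y, Lag x y = g x + (1 / n : ℝ) * (∑ i, y i * ⟪a i, x⟫) - φ y)
    (x : EuclideanSpace ℝ (Fin d)) (y y' : EuclideanSpace ℝ (Fin n)) :
    Lag x y - Lag x y' ≤
      ∑ i, ((1 / n : ℝ) * ⟪a i, x⟫ - φ' y i) * (y i - y' i) + 1 / (2 * α) * ‖y - y'‖ ^ 2 := by
  have hφ := le_add_inner_add_half_mul_norm_sq_of_lipschitz_gradient hφdiff hφlip y y'
  have hinner : ⟪φ' y, y' - y⟫ = -∑ i, φ' y i * (y i - y' i) := by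
    rw [PiLp.inner_apply, ← Finset.sum_neg_distrib]
    exact Finset.sum_congr rfl fun i _ => by simp; ring
  rw [hinner, norm_sub_rev, show 1 / α / 2 = 1 / (2 * α) by ring] at hφ
  have hsum : ∑ i, ((1 / n : ℝ) * ⟪a i, x⟫ - φ' y i) * (y i - y' i) =
      (1 / n : ℝ) * (∑ i, y i * ⟪a i, x⟫ - ∑ i, y' i * ⟪a i, x⟫) - ∑ i, φ' y i * (y i - y' i) := by
    rw [← Finset.sum_sub_distrib, Finset.mul_sum, ← Finset.sum_sub_distrib]
    exact Finset.sum_congr rfl fun i _ => by ring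
  rw [hLag, hLag, hsum]
  linarith

theorem stmt_9_general {n d : ℕ} (a : Fin n → EuclideanSpace ℝ (Fin d)) (R : ℝ)
    (hR : ∀ i, ‖a i‖ ^ 2 ≤ R)
    (g : EuclideanSpace ℝ (Fin d) → ℝ)
    (φ : EuclideanSpace ℝ (Fin n) → ℝ)
    (φ' : EuclideanSpace ℝ (Fin n) → EuclideanSpace ℝ (Fin n))
    (α : ℝ)
    (hφdiff : ∀ y, HasGradientAt φ (φ' y) y)
    (hφlip : ∀ u v, ‖φ' u - φ' v‖ ≤ (1 / α) * ‖u - v‖)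
    (Lag : EuclideanSpace ℝ (Fin d) → EuclideanSpace ℝ (Fin n) → ℝ)
    (hLag : ∀ x y, Lag x y = g x + (1 / n : ℝ) * (∑ i, y i * ⟪a i, x⟫) - φ y)
    (D : EuclideanSpace ℝ (Fin n) → ℝ)
    (D' : EuclideanSpace ℝ (Fin n) → EuclideanSpace ℝ (Fin n))
    (β : ℝ) (hβ : 0 < β)
    (hDsc : ∀ u v, (-D u) + ⟪-D' u, v - u⟫ + (1 / β) / 2 * ‖v - u‖ ^ 2 ≤ -D v)
    (Dstar : ℝ)
    -- 2α ≥ β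
    (hαβ : β ≤ 2 * α)
    (δ : ℝ) (hδ : 0 < δ) (k : ℕ)
    (xt xnext : EuclideanSpace ℝ (Fin d))
    (yprev yt : EuclideanSpace ℝ (Fin n))
    (I : Finset (Fin n)) (hI : I.card = k)
    (hout : ∀ i ∉ I, yt i = yprev i)
    (hin : ∀ i ∈ I, yt i - yprev i = δ * ((1 / n : ℝ) * ⟪a i, xt⟫ - φ' yt i))
    (xbar : EuclideanSpace ℝ (Fin d))
    (hgradD : ∀ i, D' yt i = (1 / n : ℝ) * ⟪a i, xbar⟫ - φ' yt i) :
    ((Dstar - D yt) - (Dstar - D yprev)) +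
        ((Lag xnext yt - D yt) - (Lag xt yprev - D yprev)) ≤
      (Lag xnext yt - Lag xt yt) - (1 / (2 * δ)) * ‖yt - yprev‖ ^ 2 +
        (2 * δ * R * k / n ^ 2 : ℝ) * ‖xbar - xt‖ ^ 2 := by
  have hsupp : ∀ i ∉ I, (yt - yprev) i = 0 := fun i hi => by simp [hout i hi]
  have hnorm := EuclideanSpace.norm_sq_eq_sum_of_eq_zero_off hsupp
  have hdual := le_sub_inner_sub_half_mul_norm_sq_of_strongConvex_neg hDsc yt yprev
  rw [EuclideanSpace.inner_eq_sum_of_eq_zero_off hsupp] at hdual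
  have hprimal := lagrangian_sub_le a g hφdiff hφlip hLag xt yt yprev
  rw [← Finset.sum_subset I.subset_univ fun i _ hi => by simp [hout i hi]] at hprimal
  have hcoord : ∀ i ∈ I,
      -2 * (D' yt i * (yt i - yprev i)) + ((1 / n : ℝ) * ⟪a i, xt⟫ - φ' yt i) * (yt i - yprev i) ≤
        -(1 / (2 * δ)) * (yt i - yprev i) ^ 2 +
          2 * δ * ((1 / n : ℝ) * ⟪a i, xbar - xt⟫) ^ 2 := fun i hi => by
    have hsplit : D' yt i = ((1 / n : ℝ) * ⟪a i, xt⟫ - φ' yt i) + (1 / n : ℝ) * ⟪a i, xbar - xt⟫ := by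
      rw [hgradD, inner_sub_right]; ring
    rw [hsplit]
    exact neg_two_mul_add_mul_le_of_eq_mul hδ (hin i hi)
  have hsum := Finset.sum_le_sum hcoord
  simp only [Finset.sum_add_distrib, ← Finset.mul_sum, mul_pow] at hsum
  have hCS := sum_sq_inner_le_card_mul I (fun i _ => hR i) (xbar - xt)
  have hαβ' : 1 / (2 * α) ≤ 1 / β := one_div_le_one_div_of_le hβ hαβ
  simp only [PiLp.sub_apply] at hnorm hdual
  rw [← hnorm] at hsum
  rw [hI] at hCS
  have hcurv := mul_le_mul_of_nonneg_right hαβ' (sq_nonneg ‖yt - yprev‖)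
  have hcross := mul_le_mul_of_nonneg_left hCS (by positivity : (0 : ℝ) ≤ 2 * δ * (1 / n) ^ 2)
  have hcoef : 2 * δ * (1 / n : ℝ) ^ 2 * (k * R * ‖xbar - xt‖ ^ 2) =
      (2 * δ * R * k / n ^ 2 : ℝ) * ‖xbar - xt‖ ^ 2 := by ring
  linarith

theorem stmt_9 {n d : ℕ} (a : Fin n → EuclideanSpace ℝ (Fin d)) (R : ℝ)
    (hR : ∀ i, ‖a i‖ ^ 2 ≤ R)
    (g : EuclideanSpace ℝ (Fin d) → ℝ)
    (g' : EuclideanSpace ℝ (Fin d) → EuclideanSpace ℝ (Fin d))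
    (μ L : ℝ) (hμ : 0 < μ) (hμL : μ ≤ L)
    (hgdiff : ∀ x, HasGradientAt g (g' x) x)
    (hgsc : ∀ u v, g u + ⟪g' u, v - u⟫ + μ / 2 * ‖v - u‖ ^ 2 ≤ g v)
    (hgsm : ∀ u v, g v ≤ g u + ⟪g' u, v - u⟫ + L / 2 * ‖v - u‖ ^ 2)
    (φ : EuclideanSpace ℝ (Fin n) → ℝ)
    (φ' : EuclideanSpace ℝ (Fin n) → EuclideanSpace ℝ (Fin n))
    (α : ℝ) (hα : 0 < α)
    (hφdiff : ∀ y, HasGradientAt φ (φ' y) y)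
    (hφconv : ConvexOn ℝ Set.univ φ)
    (hφlip : ∀ u v, ‖φ' u - φ' v‖ ≤ (1 / α) * ‖u - v‖)
    (Lag : EuclideanSpace ℝ (Fin d) → EuclideanSpace ℝ (Fin n) → ℝ)
    (hLag : ∀ x y, Lag x y = g x + (1 / n : ℝ) * (∑ i, y i * ⟪a i, x⟫) - φ y)
    (C : Set (EuclideanSpace ℝ (Fin d)))
    (hCne : C.Nonempty) (hCcl : IsClosed C) (hCconv : Convex ℝ C)
    (D : EuclideanSpace ℝ (Fin n) → ℝ)
    (hD : ∀ y, IsLeast ((fun x => Lag x y) '' C) (D y))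
    (D' : EuclideanSpace ℝ (Fin n) → EuclideanSpace ℝ (Fin n))
    (β : ℝ) (hβ : 0 < β)
    (hDdiff : ∀ y, HasGradientAt D (D' y) y)
    (hDsc : ∀ u v, (-D u) + ⟪-D' u, v - u⟫ + (1 / β) / 2 * ‖v - u‖ ^ 2 ≤ -D v)
    (Dstar : ℝ) (hDub : ∀ y, D y ≤ Dstar) (hDatt : ∃ y, D y = Dstar)
    -- 2α ≥ β
    (hαβ : β ≤ 2 * α)
    (δ : ℝ) (hδ : 0 < δ) (k : ℕ) (hk1 : 1 ≤ k) (hkn : k ≤ n)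
    (xt xnext : EuclideanSpace ℝ (Fin d))
    (yprev yt : EuclideanSpace ℝ (Fin n))
    (I : Finset (Fin n)) (hI : I.card = k)
    (hout : ∀ i ∉ I, yt i = yprev i)
    (hin : ∀ i ∈ I, yt i - yprev i = δ * ((1 / n : ℝ) * ⟪a i, xt⟫ - φ' yt i))
    (xbar : EuclideanSpace ℝ (Fin d)) (hxbarC : xbar ∈ C)
    (hxbarD : D yt = Lag xbar yt)
    (hgradD : ∀ i, D' yt i = (1 / n : ℝ) * ⟪a i, xbar⟫ - φ' yt i) :
    ((Dstar - D yt) - (Dstar - D yprev)) +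
        ((Lag xnext yt - D yt) - (Lag xt yprev - D yprev)) ≤
      (Lag xnext yt - Lag xt yt) - (1 / (2 * δ)) * ‖yt - yprev‖ ^ 2 +
        (2 * δ * R * k / n ^ 2 : ℝ) * ‖xbar - xt‖ ^ 2 :=
  stmt_9_general a R hR g φ φ' α hφdiff hφlip Lag hLag D D' β hβ hDsc Dstar hαβ δ hδ k xt xnext
    yprev yt I hI hout hin xbar hgradD
end

section
/- Assume the primal–dual setup with 2α ≥ β, let δ > 0, 1 ≤ k ≤ n, set η = μ/(2L), and suppose 5Rδk/(μn²) ≤ 1. Suppose x^t ∈ C, y^{t−1} ∈ ℝ^n, and that one step of the Primal–Dual Block Frank–Wolfe method with step sizes η, δ and block size k produces x̄^t, I, y^t, x̃^t, x^{t+1}. Define Δ_d^t = D* − D(y^t), Δ_d^{t−1} = D* − D(y^{t−1}), Δ_p^t = L(x^{t+1}, y^t) − D(y^t), Δ_p^{t−1} = L(x^t, y^{t−1}) − D(y^{t−1}). Then Δ_d^t − Δ_d^{t−1} + Δ_p^t − Δ_p^{t−1} ≤ −(kδ/(2nβ))·Δ_d^t − ((1 − 5Rδk/(μn²))·(μ/(4L))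 − 5Rδk/(μn²))·Δ_p^t. -/
/-!
Primal side: `L(·, yᵗ)` is `μ`-strongly convex and `L`-smooth with gradient `∇g + (1/n)Aᵀyᵗ`, so
the regularised Frank–Wolfe step with `η = μ/(2L)` contracts the primal gap by `1 - η` and gains
an extra `(ημ/4)‖x̄ᵗ - xᵗ‖²`, while quadratic growth around the constrained minimiser `x̄ᵗ` gives
`L(xᵗ, yᵗ) - D(yᵗ) ≥ (μ/2)‖x̄ᵗ - xᵗ‖²`.

Dual side: `∇D(yᵗ) = w + e` with `e = (1/n)A(x̄ᵗ - xᵗ)`, and `eᵢ² ≤ (R/n²)‖x̄ᵗ - xᵗ‖²`.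
Strong concavity of `D` and smoothness of `φ` (with `β ≤ 2α`) make the block step along `w`
gain `(δ/2)‖w_I‖²` up to an error `2δ(Rk/n²)‖x̄ᵗ - xᵗ‖²`. The Polyak–Łojasiewicz inequality
`D* - D(yᵗ) ≤ (β/2)‖∇D(yᵗ)‖²` together with the greedy choice `k‖w‖² ≤ n‖w_I‖²` turns that gain
into the fraction `kδ/(2nβ)` of the dual gap. All error terms add up to
`(5Rδk/(2n²))‖x̄ᵗ - xᵗ‖²`, which the primal decrease absorbs.
-/

open RealInnerProductSpace Filter Topology

section GradientInequalities

variable {E : Type*} [NormedAddCommGroup E] [InnerProductSpace ℝ E]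

def StrongConvexGrad (f : E → ℝ) (f' : E → E) (m : ℝ) : Prop :=
  ∀ u v, f u + ⟪f' u, v - u⟫ + m / 2 * ‖v - u‖ ^ 2 ≤ f v

def SmoothGrad (f : E → ℝ) (f' : E → E) (M : ℝ) : Prop :=
  ∀ u v, f v ≤ f u + ⟪f' u, v - u⟫ + M / 2 * ‖v - u‖ ^ 2

variable {f : E → ℝ} {f' : E → E} {m M : ℝ}

theorem StrongConvexGrad.add_inner_add_const (hf : StrongConvexGrad f f' m) (c : E) (r : ℝ) :
    StrongConvexGrad (fun x => f x + ⟪c, x⟫ + r) (fun x => f' x + c) m := by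
  intro u v
  have := hf u v
  simp only [inner_add_left, inner_sub_right] at this ⊢
  linarith

theorem SmoothGrad.add_inner_add_const (hf : SmoothGrad f f' M) (c : E) (r : ℝ) :
    SmoothGrad (fun x => f x + ⟪c, x⟫ + r) (fun x => f' x + c) M := by
  intro u v
  have := hf u v
  simp only [inner_add_left, inner_sub_right] at this ⊢
  linarith

theorem SmoothGrad.of_lipschitz [CompleteSpace E] (hf : ∀ x, HasGradientAt f (f' x) x)
    (hlip : ∀ u v, ‖f' u - f' v‖ ≤ M * ‖u - v‖) : SmoothGrad f f' M := by
  intro u v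
  set ψ : ℝ → ℝ := fun t => f (u + t • (v - u)) - t * ⟪f' u, v - u⟫ - M * t ^ 2 / 2 * ‖v - u‖ ^ 2
  have hψ : ∀ t, HasDerivAt ψ (⟪f' (u + t • (v - u)) - f' u, v - u⟫ - M * t * ‖v - u‖ ^ 2) t := by
    intro t
    have hline : HasDerivAt (fun t : ℝ => u + t • (v - u)) (v - u) t := by
      simpa using ((hasDerivAt_id t).smul_const (v - u)).const_add u
    have hf_line :
        HasDerivAt (fun t : ℝ => f (u + t • (v - u))) ⟪f' (u + t • (v - u)), v - u⟫ t := by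
      simpa [Function.comp_def] using (hf _).hasFDerivAt.comp_hasDerivAt t hline
    have hquad : HasDerivAt (fun t : ℝ => M * t ^ 2 / 2 * ‖v - u‖ ^ 2) (M * t * ‖v - u‖ ^ 2) t := by
      have := (((hasDerivAt_pow 2 t).const_mul M).div_const 2).mul_const (‖v - u‖ ^ 2)
      exact this.congr_deriv (by push_cast; ring)
    rw [inner_sub_left]
    exact ((hf_line.sub ((hasDerivAt_id' t).mul_const _)).sub hquad).congr_deriv (by ring)
  have hanti : AntitoneOn ψ (Set.Icc 0 1) := by
    refine antitoneOn_of_deriv_nonpos (convex_Icc 0 1)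
      (fun t _ => (hψ t).continuousAt.continuousWithinAt)
      (fun t _ => (hψ t).differentiableAt.differentiableWithinAt) fun t ht => ?_
    rw [interior_Icc] at ht
    rw [(hψ t).deriv, sub_nonpos]
    calc ⟪f' (u + t • (v - u)) - f' u, v - u⟫
        ≤ ‖f' (u + t • (v - u)) - f' u‖ * ‖v - u‖ := real_inner_le_norm _ _
      _ ≤ M * ‖t • (v - u)‖ * ‖v - u‖ := by
          gcongr
          simpa using hlip (u + t • (v - u)) u
      _ = M * t * ‖v - u‖ ^ 2 := by
          rw [norm_smul, Real.norm_of_nonneg ht.1.le]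
          ring
  have h01 := hanti (by simp) (by simp) zero_le_one
  simp only [ψ, one_smul, zero_smul, add_zero, add_sub_cancel] at h01
  linarith

theorem SmoothGrad.inner_nonneg_of_isMinOn (hf : SmoothGrad f f' M) {C : Set E}
    (hC : Convex ℝ C) {x₀ x : E} (hmin : IsMinOn f C x₀) (hx₀ : x₀ ∈ C) (hx : x ∈ C) :
    0 ≤ ⟪f' x₀, x - x₀⟫ := by
  have hseg : ∀ s ∈ Set.Ioc (0 : ℝ) 1, 0 ≤ ⟪f' x₀, x - x₀⟫ + M / 2 * ‖x - x₀‖ ^ 2 * s := by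
    rintro s ⟨hs0, hs1⟩
    have h := (hmin (hC.add_smul_sub_mem hx₀ hx ⟨hs0.le, hs1⟩)).trans (hf x₀ _)
    rw [add_sub_cancel_left, inner_smul_right, norm_smul, Real.norm_of_nonneg hs0.le] at h
    nlinarith
  have hlim : Tendsto (fun s => ⟪f' x₀, x - x₀⟫ + M / 2 * ‖x - x₀‖ ^ 2 * s) (𝓝[>] 0)
      (𝓝 ⟪f' x₀, x - x₀⟫) := by
    refine Tendsto.mono_left ?_ nhdsWithin_le_nhds
    have hcont : Continuous fun s : ℝ => ⟪f' x₀, x - x₀⟫ + M / 2 * ‖x - x₀‖ ^ 2 * s := by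
      fun_prop
    simpa using hcont.tendsto 0
  exact ge_of_tendsto hlim (eventually_of_mem (Ioc_mem_nhdsGT one_pos) hseg)

theorem StrongConvexGrad.add_sq_le_of_isMinOn (hsc : StrongConvexGrad f f' m)
    (hsm : SmoothGrad f f' M) {C : Set E} (hC : Convex ℝ C) {x₀ x : E} (hmin : IsMinOn f C x₀)
    (hx₀ : x₀ ∈ C) (hx : x ∈ C) : f x₀ + m / 2 * ‖x - x₀‖ ^ 2 ≤ f x := by
  have := hsm.inner_nonneg_of_isMinOn hC hmin hx₀ hx
  linarith [hsc x₀ x]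

theorem StrongConvexGrad.sub_le_norm_sq_div (hf : StrongConvexGrad f f' m) (hm : 0 < m)
    (u v : E) : f u - f v ≤ ‖f' u‖ ^ 2 / (2 * m) := by
  have hsq : 0 ≤ ‖f' u + m • (v - u)‖ ^ 2 := sq_nonneg _
  rw [norm_add_sq_real, inner_smul_right, norm_smul, Real.norm_of_nonneg hm.le] at hsq
  rw [le_div_iff₀ (by positivity)]
  nlinarith [hf u v]

theorem StrongConvexGrad.frankWolfe_step_le (hsc : StrongConvexGrad f f' m)
    (hsm : SmoothGrad f f' M) {η : ℝ} (hη : 0 ≤ η) {x x₀ x' : E}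
    (hx' : ⟪f' x, x'⟫ + M * η / 2 * ‖x' - x‖ ^ 2 ≤ ⟪f' x, x₀⟫ + M * η / 2 * ‖x₀ - x‖ ^ 2) :
    f ((1 - η) • x + η • x') ≤
      f x - η * (f x - f x₀) - η * (m - M * η) / 2 * ‖x₀ - x‖ ^ 2 := by
  have hstep : (1 - η) • x + η • x' - x = η • (x' - x) := by module
  have hup := hsm x ((1 - η) • x + η • x')
  rw [hstep, inner_smul_right, norm_smul, Real.norm_of_nonneg hη, inner_sub_right] at hup
  have hlow := hsc x x₀
  rw [inner_sub_right] at hlow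
  have := mul_le_mul_of_nonneg_left hx' hη
  nlinarith

section BlockStep

variable {ι : Type*} [Fintype ι] [DecidableEq ι] {I : Finset ι} {δ : ℝ} {w : ι → ℝ}
  {y y' : EuclideanSpace ℝ ι}

theorem inner_sub_eq_of_block (hy : ∀ i, y' i - y i = if i ∈ I then δ * w i else 0)
    (z : EuclideanSpace ℝ ι) : ⟪z, y - y'⟫ = -(δ * ∑ i ∈ I, z i * w i) := by
  have hy' : ∀ i, y i - y' i = if i ∈ I then -(δ * w i) else 0 := fun i => by
    rw [← neg_sub, hy]; split_ifs <;> simp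
  simp only [PiLp.inner_apply, PiLp.sub_apply, hy', RCLike.inner_apply, conj_trivial]
  simp only [ite_mul, zero_mul, Finset.sum_ite_mem, Finset.univ_inter, Finset.mul_sum,
    ← Finset.sum_neg_distrib]
  exact Finset.sum_congr rfl fun i _ => by ring

theorem norm_sub_sq_eq_of_block (hy : ∀ i, y' i - y i = if i ∈ I then δ * w i else 0) :
    ‖y - y'‖ ^ 2 = δ ^ 2 * ∑ i ∈ I, w i ^ 2 := by
  rw [← real_inner_self_eq_norm_sq, inner_sub_eq_of_block hy, Finset.mul_sum, Finset.mul_sum,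
    ← Finset.sum_neg_distrib]
  refine Finset.sum_congr rfl fun i hi => ?_
  rw [PiLp.sub_apply, ← neg_sub, hy, if_pos hi]
  ring

variable {f : EuclideanSpace ℝ ι → ℝ} {f' : EuclideanSpace ℝ ι → EuclideanSpace ℝ ι} {m M : ℝ}

theorem SmoothGrad.le_of_block (hf : SmoothGrad f f' M)
    (hy : ∀ i, y' i - y i = if i ∈ I then δ * w i else 0) :
    f y ≤ f y' - δ * ∑ i ∈ I, f' y' i * w i + M / 2 * (δ ^ 2 * ∑ i ∈ I, w i ^ 2) := by
  have := hf y' y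
  rwa [inner_sub_eq_of_block hy, norm_sub_sq_eq_of_block hy, ← sub_eq_add_neg] at this

theorem StrongConvexGrad.le_of_block (hf : StrongConvexGrad f f' m)
    (hy : ∀ i, y' i - y i = if i ∈ I then δ * w i else 0) :
    f y' - δ * ∑ i ∈ I, f' y' i * w i + m / 2 * (δ ^ 2 * ∑ i ∈ I, w i ^ 2) ≤ f y := by
  have := hf y' y
  rwa [inner_sub_eq_of_block hy, norm_sub_sq_eq_of_block hy, ← sub_eq_add_neg] at this

end BlockStep

theorem Finset.card_mul_sum_le_of_forall_sum_le {ι : Type*} [Fintype ι] [DecidableEq ι]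
    (f : ι → ℝ) (I : Finset ι)
    (hI : ∀ J : Finset ι, J.card = I.card → ∑ i ∈ J, f i ≤ ∑ i ∈ I, f i) :
    I.card * ∑ i, f i ≤ Fintype.card ι * ∑ i ∈ I, f i := by
  have hswap : ∀ i ∉ I, ∀ j ∈ I, f i ≤ f j := by
    intro i hi j hj
    have hi' : i ∉ I.erase j := fun h => hi (Finset.mem_of_mem_erase h)
    have hcard : (insert i (I.erase j)).card = I.card := by
      rw [Finset.card_insert_of_notMem hi', Finset.card_erase_add_one hj]
    have := hI _ hcard
    rw [Finset.sum_insert hi', ← Finset.add_sum_erase I f hj] at this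
    linarith
  have hcross : I.card * ∑ i ∈ Iᶜ, f i ≤ Iᶜ.card * ∑ j ∈ I, f j := by
    have := Finset.sum_le_sum fun i hi => Finset.sum_le_sum fun j hj =>
      hswap i (Finset.mem_compl.1 hi) j hj
    simpa [Finset.sum_const, Finset.mul_sum] using this
  rw [← Finset.sum_add_sum_compl I f, ← Finset.card_add_card_compl I]
  push_cast
  linarith

theorem real_inner_sq_le_mul {F : Type*} [NormedAddCommGroup F] [InnerProductSpace ℝ F] {a : F}
    {R : ℝ} (ha : ‖a‖ ^ 2 ≤ R) (z : F) : ⟪a, z⟫ ^ 2 ≤ R * ‖z‖ ^ 2 := by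
  have := real_inner_mul_inner_self_le a z
  rw [real_inner_self_eq_norm_sq, real_inner_self_eq_norm_sq] at this
  nlinarith [sq_nonneg ‖z‖]

theorem Finset.sum_sq_mul_inner_le {ι F : Type*} [NormedAddCommGroup F]
    [InnerProductSpace ℝ F] (J : Finset ι) {a : ι → F} {R : ℝ} (hR : ∀ i, ‖a i‖ ^ 2 ≤ R)
    (c : ℝ) (z : F) : ∑ i ∈ J, (c * ⟪a i, z⟫) ^ 2 ≤ J.card * (c ^ 2 * (R * ‖z‖ ^ 2)) := by
  have hterm : ∀ i ∈ J, (c * ⟪a i, z⟫) ^ 2 ≤ c ^ 2 * (R * ‖z‖ ^ 2) := fun i _ => by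
    rw [mul_pow]
    exact mul_le_mul_of_nonneg_left (real_inner_sq_le_mul (hR i) z) (sq_nonneg c)
  simpa using J.sum_le_card_nsmul _ _ hterm

section Lagrangian

variable {n : ℕ} {F : Type*} [NormedAddCommGroup F] [InnerProductSpace ℝ F] {a : Fin n → F}
  {g : F → ℝ} {φ : EuclideanSpace ℝ (Fin n) → ℝ} {Lag : F → EuclideanSpace ℝ (Fin n) → ℝ}

theorem lagrangian_eq_add_inner_left
    (hLag : ∀ x y, Lag x y = g x + (1 / n : ℝ) * (∑ i, y i * ⟪a i, x⟫) - φ y) (x : F)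
    (y : EuclideanSpace ℝ (Fin n)) :
    Lag x y = g x + ⟪(n : ℝ)⁻¹ • ∑ i, y i • a i, x⟫ + -φ y := by
  simp only [hLag, real_inner_smul_left, sum_inner]
  ring

theorem neg_lagrangian_eq_add_inner_right
    (hLag : ∀ x y, Lag x y = g x + (1 / n : ℝ) * (∑ i, y i * ⟪a i, x⟫) - φ y) (x : F)
    (y : EuclideanSpace ℝ (Fin n)) :
    -Lag x y = φ y + ⟪-WithLp.toLp 2 fun i => (1 / n : ℝ) * ⟪a i, x⟫, y⟫ + -g x := by
  simp only [hLag, inner_neg_left, PiLp.inner_apply, RCLike.inner_apply, conj_trivial,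
    Finset.mul_sum, mul_left_comm (1 / (n : ℝ))]
  ring

theorem StrongConvexGrad.lagrangian
    (hLag : ∀ x y, Lag x y = g x + (1 / n : ℝ) * (∑ i, y i * ⟪a i, x⟫) - φ y) {g' : F → F}
    {μ : ℝ} (hg : StrongConvexGrad g g' μ) (y : EuclideanSpace ℝ (Fin n)) :
    StrongConvexGrad (fun x => Lag x y) (fun x => g' x + (n : ℝ)⁻¹ • ∑ i, y i • a i) μ := by
  simpa only [lagrangian_eq_add_inner_left hLag] using hg.add_inner_add_const _ (-φ y)

theorem SmoothGrad.lagrangian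
    (hLag : ∀ x y, Lag x y = g x + (1 / n : ℝ) * (∑ i, y i * ⟪a i, x⟫) - φ y) {g' : F → F}
    {L : ℝ} (hg : SmoothGrad g g' L) (y : EuclideanSpace ℝ (Fin n)) :
    SmoothGrad (fun x => Lag x y) (fun x => g' x + (n : ℝ)⁻¹ • ∑ i, y i • a i) L := by
  simpa only [lagrangian_eq_add_inner_left hLag] using hg.add_inner_add_const _ (-φ y)

variable {φ' D' : EuclideanSpace ℝ (Fin n) → EuclideanSpace ℝ (Fin n)}

theorem dual_step_le {R α β δ : ℝ} (hR : ∀ i, ‖a i‖ ^ 2 ≤ R)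
    (hLag : ∀ x y, Lag x y = g x + (1 / n : ℝ) * (∑ i, y i * ⟪a i, x⟫) - φ y)
    (hφ : SmoothGrad φ φ' (1 / α)) {D : EuclideanSpace ℝ (Fin n) → ℝ}
    (hD : StrongConvexGrad (fun y => -D y) (fun y => -D' y) (1 / β)) (hβ : 0 < β)
    (hαβ : β ≤ 2 * α) (hδ : 0 < δ) {I : Finset (Fin n)} {x x₀ : F}
    {y y' : EuclideanSpace ℝ (Fin n)} (hgradD : ∀ i, D' y' i = (1 / n : ℝ) * ⟪a i, x₀⟫ - φ' y' i)
    {w : Fin n → ℝ} (hw : ∀ i, w i = (1 / n : ℝ) * ⟪a i, x⟫ - φ' y' i)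
    (hstep : ∀ i, y' i - y i = if i ∈ I then δ * w i else 0) :
    2 * (D y - D y') + (Lag x y' - Lag x y) ≤
      -(δ / 2) * ∑ i ∈ I, w i ^ 2 + 2 * (I.card * δ * R / n ^ 2) * ‖x₀ - x‖ ^ 2 := by
  set e : Fin n → ℝ := fun i => (1 / n : ℝ) * ⟪a i, x₀ - x⟫
  have hLag_y : SmoothGrad (fun y => -Lag x y)
      (fun y => φ' y + -WithLp.toLp 2 fun i => (1 / n : ℝ) * ⟪a i, x⟫) (1 / α) := by
    simpa only [neg_lagrangian_eq_add_inner_right hLag] using hφ.add_inner_add_const _ (-g x)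
  have hLag_step := hLag_y.le_of_block hstep
  have hD_step := hD.le_of_block hstep
  have hLag_grad : ∑ i ∈ I, (φ' y' + -WithLp.toLp 2 fun i => (1 / n : ℝ) * ⟪a i, x⟫) i * w i =
      -∑ i ∈ I, w i ^ 2 := by
    simp only [← Finset.sum_neg_distrib]
    exact Finset.sum_congr rfl fun i _ => by simp [hw]; ring
  have hD_grad : ∑ i ∈ I, (-D' y') i * w i = -∑ i ∈ I, w i ^ 2 - ∑ i ∈ I, e i * w i := by
    simp only [← Finset.sum_neg_distrib, ← Finset.sum_sub_distrib]
    exact Finset.sum_congr rfl fun i _ => by simp [hw, e, hgradD, inner_sub_right]; ring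
  have hcross : -∑ i ∈ I, e i * w i ≤ 1 / 4 * ∑ i ∈ I, w i ^ 2 + ∑ i ∈ I, e i ^ 2 := by
    simp only [← Finset.sum_neg_distrib, Finset.mul_sum, ← Finset.sum_add_distrib]
    exact Finset.sum_le_sum fun i _ => by nlinarith [sq_nonneg (w i / 2 + e i)]
  have he : ∑ i ∈ I, e i ^ 2 ≤ I.card * R / n ^ 2 * ‖x₀ - x‖ ^ 2 :=
    (I.sum_sq_mul_inner_le hR _ _).trans_eq (by ring)
  have hα : 1 / α / 2 ≤ 1 / β := by
    rw [div_div, div_le_div_iff₀ (by linarith) hβ]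
    linarith
  rw [hLag_grad] at hLag_step
  rw [hD_grad] at hD_step
  have h1 := mul_le_mul_of_nonneg_right hα (by positivity : 0 ≤ δ ^ 2 * ∑ i ∈ I, w i ^ 2)
  have h2 := mul_le_mul_of_nonneg_left hcross hδ.le
  have h3 := mul_le_mul_of_nonneg_left he hδ.le
  linear_combination 2 * hD_step + hLag_step + h1 + 2 * h2 + 2 * h3

theorem dual_gap_le {R β Dstar : ℝ} (hR : ∀ i, ‖a i‖ ^ 2 ≤ R) {D : EuclideanSpace ℝ (Fin n) → ℝ}
    (hD : StrongConvexGrad (fun y => -D y) (fun y => -D' y) (1 / β)) (hβ : 0 < β)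
    (hDatt : ∃ y, D y = Dstar) {I : Finset (Fin n)} {x x₀ : F} {y' : EuclideanSpace ℝ (Fin n)}
    (hgradD : ∀ i, D' y' i = (1 / n : ℝ) * ⟪a i, x₀⟫ - φ' y' i)
    {w : Fin n → ℝ} (hw : ∀ i, w i = (1 / n : ℝ) * ⟪a i, x⟫ - φ' y' i)
    (hgreedy : ∀ J : Finset (Fin n), J.card = I.card → ∑ i ∈ J, w i ^ 2 ≤ ∑ i ∈ I, w i ^ 2) :
    I.card * (Dstar - D y') ≤ β * (n * ∑ i ∈ I, w i ^ 2 + I.card * R / n * ‖x₀ - x‖ ^ 2) := by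
  obtain ⟨y, rfl⟩ := hDatt
  set e : Fin n → ℝ := fun i => (1 / n : ℝ) * ⟪a i, x₀ - x⟫
  have hPL := hD.sub_le_norm_sq_div (by positivity) y' y
  have hgrad : ‖-D' y'‖ ^ 2 = ∑ i, (w i + e i) ^ 2 := by
    rw [norm_neg, EuclideanSpace.real_norm_sq_eq]
    exact Finset.sum_congr rfl fun i _ => by simp [hw, e, hgradD, inner_sub_right]; ring
  have hsplit : ∑ i, (w i + e i) ^ 2 ≤ 2 * ∑ i, w i ^ 2 + 2 * ∑ i, e i ^ 2 := by
    simp only [Finset.mul_sum, ← Finset.sum_add_distrib]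
    exact Finset.sum_le_sum fun i _ => by nlinarith [sq_nonneg (w i - e i)]
  have hw_avg := Finset.card_mul_sum_le_of_forall_sum_le (fun i => w i ^ 2) I hgreedy
  rw [Fintype.card_fin] at hw_avg
  have he : ∑ i, e i ^ 2 ≤ R / n * ‖x₀ - x‖ ^ 2 := by
    refine (Finset.univ.sum_sq_mul_inner_le hR _ _).trans_eq ?_
    rw [Finset.card_univ, Fintype.card_fin]
    rcases eq_or_ne (n : ℝ) 0 with hn | hn
    · simp [hn]
    · field_simp
  have hgap : D y - D y' ≤ β * (∑ i, w i ^ 2 + ∑ i, e i ^ 2) :=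
    calc D y - D y' ≤ ‖-D' y'‖ ^ 2 / (2 * (1 / β)) := by linarith
      _ = β / 2 * ∑ i, (w i + e i) ^ 2 := by rw [hgrad]; field_simp
      _ ≤ β / 2 * (2 * ∑ i, w i ^ 2 + 2 * ∑ i, e i ^ 2) := by gcongr
      _ = β * (∑ i, w i ^ 2 + ∑ i, e i ^ 2) := by ring
  calc I.card * (D y - D y') ≤ I.card * (β * (∑ i, w i ^ 2 + ∑ i, e i ^ 2)) := by gcongr
    _ = β * (I.card * ∑ i, w i ^ 2 + I.card * ∑ i, e i ^ 2) := by ring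
    _ ≤ β * (n * ∑ i ∈ I, w i ^ 2 + I.card * (R / n * ‖x₀ - x‖ ^ 2)) := by gcongr
    _ = β * (n * ∑ i ∈ I, w i ^ 2 + I.card * R / n * ‖x₀ - x‖ ^ 2) := by ring

end Lagrangian

theorem potential_step_le {Dp Dn Ds Lp L0 L1 S X η μ L β δ k n R : ℝ} (hμ : 0 < μ) (hμL : μ ≤ L)
    (hβ : 0 < β) (hδ : 0 < δ) (hk : 0 < k) (hn : 0 < n) (hR : 0 ≤ R) (hX : 0 ≤ X)
    (hη : η = μ / (2 * L)) (hq : 5 * R * δ * k / (μ * n ^ 2) ≤ 1)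
    (hdual : 2 * (Dp - Dn) + (L0 - Lp) ≤ -(δ / 2) * S + 2 * (k * δ * R / n ^ 2) * X)
    (hgap : k * (Ds - Dn) ≤ β * (n * S + k * R / n * X))
    (hgrowth : Dn + μ / 2 * X ≤ L0)
    (hprog : L1 ≤ L0 - η * (L0 - Dn) - η * (μ - L * η) / 2 * X) :
    ((Ds - Dn) - (Ds - Dp)) + ((L1 - Dn) - (Lp - Dp)) ≤
      -(k * δ / (2 * n * β)) * (Ds - Dn) -
        ((1 - 5 * R * δ * k / (μ * n ^ 2)) * (μ / (4 * L)) - 5 * R * δ * k / (μ * n ^ 2)) *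
          (L1 - Dn) := by
  have hL : 0 < L := hμ.trans_le hμL
  have hη0 : 0 < η := by rw [hη]; positivity
  have hη1 : η ≤ 1 / 2 := by
    rw [hη, div_le_div_iff₀ (by positivity) (by norm_num)]
    linarith
  have hLη : L * η = μ / 2 := by rw [hη]; field_simp
  have hμ4L : μ / (4 * L) = η / 2 := by rw [hη]; field_simp; ring
  set q := 5 * R * δ * k / (μ * n ^ 2) with hq_def
  have hq0 : 0 ≤ q := by positivity
  have hqμ : q * μ = 5 * (k * δ * R / n ^ 2) := by rw [hq_def]; field_simp
  clear_value q
  have hgap' : k * δ / (2 * n * β) * (Ds - Dn) ≤ δ / 2 * S + k * δ * R / n ^ 2 / 2 * X :=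
    calc k * δ / (2 * n * β) * (Ds - Dn) = δ / (2 * n * β) * (k * (Ds - Dn)) := by ring
      _ ≤ δ / (2 * n * β) * (β * (n * S + k * R / n * X)) := by gcongr
      _ = δ / 2 * S + k * δ * R / n ^ 2 / 2 * X := by field_simp
  have hdual' : 2 * (Dp - Dn) + (L0 - Lp) + k * δ / (2 * n * β) * (Ds - Dn) ≤ q * μ / 2 * X := by
    linear_combination hdual + hgap' - X / 2 * hqμ
  rw [hLη] at hprog
  rw [hμ4L]
  set c := (1 - q) * (η / 2) - q with hc_def
  have hc : 0 ≤ 1 + c := by nlinarith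
  have hcoef : (1 + c) * (1 - η) - 1 ≤ 0 := by nlinarith [mul_nonneg hq0 hη0.le]
  have hX_coef : q + ((1 + c) * (1 - η) - 1) - (1 + c) * η / 2 ≤ 0 := by
    nlinarith [mul_nonneg (sub_nonneg.2 hq) hη0.le]
  have hprog' : L1 - Dn ≤ (1 - η) * (L0 - Dn) - η * μ / 4 * X := by linarith
  have h1 := mul_le_mul_of_nonneg_left hprog' hc
  have h2 := mul_le_mul_of_nonpos_left (le_sub_iff_add_le'.2 hgrowth) hcoef
  have h3 := mul_nonpos_of_nonpos_of_nonneg hX_coef (by positivity : 0 ≤ μ / 2 * X)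
  linarith

theorem stmt_10_general {n d : ℕ} (a : Fin n → EuclideanSpace ℝ (Fin d)) (R : ℝ)
    (hR : ∀ i, ‖a i‖ ^ 2 ≤ R)
    (g : EuclideanSpace ℝ (Fin d) → ℝ)
    (g' : EuclideanSpace ℝ (Fin d) → EuclideanSpace ℝ (Fin d))
    (μ L : ℝ) (hμ : 0 < μ) (hμL : μ ≤ L)
    (hgsc : ∀ u v, g u + ⟪g' u, v - u⟫ + μ / 2 * ‖v - u‖ ^ 2 ≤ g v)
    (hgsm : ∀ u v, g v ≤ g u + ⟪g' u, v - u⟫ + L / 2 * ‖v - u‖ ^ 2)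
    (φ : EuclideanSpace ℝ (Fin n) → ℝ)
    (φ' : EuclideanSpace ℝ (Fin n) → EuclideanSpace ℝ (Fin n))
    (α : ℝ)
    (hφdiff : ∀ y, HasGradientAt φ (φ' y) y)
    (hφlip : ∀ u v, ‖φ' u - φ' v‖ ≤ (1 / α) * ‖u - v‖)
    (Lag : EuclideanSpace ℝ (Fin d) → EuclideanSpace ℝ (Fin n) → ℝ)
    (hLag : ∀ x y, Lag x y = g x + (1 / n : ℝ) * (∑ i, y i * ⟪a i, x⟫) - φ y)
    (C : Set (EuclideanSpace ℝ (Fin d)))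
    (hCconv : Convex ℝ C)
    (D : EuclideanSpace ℝ (Fin n) → ℝ)
    (hD : ∀ y, IsLeast ((fun x => Lag x y) '' C) (D y))
    (D' : EuclideanSpace ℝ (Fin n) → EuclideanSpace ℝ (Fin n))
    (β : ℝ) (hβ : 0 < β)
    (hDsc : ∀ u v, (-D u) + ⟪-D' u, v - u⟫ + (1 / β) / 2 * ‖v - u‖ ^ 2 ≤ -D v)
    (Dstar : ℝ) (hDatt : ∃ y, D y = Dstar)
    -- 2α ≥ β
    (hαβ : β ≤ 2 * α)
    (δ : ℝ) (hδ : 0 < δ) (k : ℕ) (hk1 : 1 ≤ k) (hkn : k ≤ n)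
    (η : ℝ) (hη : η = μ / (2 * L))
    (hq : 5 * R * δ * k / (μ * n ^ 2) ≤ 1)
    -- state
    (xt : EuclideanSpace ℝ (Fin d)) (hxtC : xt ∈ C)
    (yprev : EuclideanSpace ℝ (Fin n))
    -- (i) dual-optimal primal point
    (yt : EuclideanSpace ℝ (Fin n))
    (xbar : EuclideanSpace ℝ (Fin d)) (hxbarC : xbar ∈ C)
    (hxbarD : D yt = Lag xbar yt)
    (hgradD : ∀ i, D' yt i = (1 / n : ℝ) * ⟪a i, xbar⟫ - φ' yt i)
    -- (ii) greedy block dual update with w i = (1/n)⟪a i, xt⟫ - φ' yt i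
    (I : Finset (Fin n)) (hI : I.card = k)
    (hgreedy : ∀ J : Finset (Fin n), J.card = k →
        ∑ i ∈ J, ((1 / n : ℝ) * ⟪a i, xt⟫ - φ' yt i) ^ 2 ≤
          ∑ i ∈ I, ((1 / n : ℝ) * ⟪a i, xt⟫ - φ' yt i) ^ 2)
    (hin : ∀ i ∈ I, yt i = yprev i + δ * ((1 / n : ℝ) * ⟪a i, xt⟫ - φ' yt i))
    (hout : ∀ i ∉ I, yt i = yprev i)
    -- (iii) block Frank-Wolfe primal update
    (xtil : EuclideanSpace ℝ (Fin d))
    (hfw : ⟪g' xt + (n : ℝ)⁻¹ • ∑ i, yt i • a i, xtil⟫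
          + L * η / 2 * ‖xtil - xt‖ ^ 2 ≤
        ⟪g' xt + (n : ℝ)⁻¹ • ∑ i, yt i • a i, xbar⟫
          + L * η / 2 * ‖xbar - xt‖ ^ 2)
    (xnext : EuclideanSpace ℝ (Fin d)) (hxnext : xnext = (1 - η) • xt + η • xtil) :
    ((Dstar - D yt) - (Dstar - D yprev)) +
        ((Lag xnext yt - D yt) - (Lag xt yprev - D yprev)) ≤
      -(k * δ / (2 * n * β) : ℝ) * (Dstar - D yt) -
        ((1 - 5 * R * δ * k / (μ * n ^ 2)) * (μ / (4 * L)) -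
            5 * R * δ * k / (μ * n ^ 2)) * (Lag xnext yt - D yt) := by
  have hn : 0 < n := hk1.trans hkn
  have hsc := StrongConvexGrad.lagrangian hLag hgsc yt
  have hsm := SmoothGrad.lagrangian hLag hgsm yt
  have hmin : IsMinOn (fun x => Lag x yt) C xbar := fun x hx =>
    hxbarD.symm.trans_le ((hD yt).2 ⟨x, hx, rfl⟩)
  have hgrowth := hsc.add_sq_le_of_isMinOn hsm hCconv hmin hxbarC hxtC
  have hprog := hsc.frankWolfe_step_le hsm
    (by rw [hη]; exact div_nonneg hμ.le (by linarith)) hfw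
  have hstep : ∀ i, yt i - yprev i =
      if i ∈ I then δ * ((1 / n : ℝ) * ⟪a i, xt⟫ - φ' yt i) else 0 := fun i => by
    split_ifs with h
    · rw [hin i h]; ring
    · rw [hout i h, sub_self]
  have hdual := dual_step_le hR hLag (SmoothGrad.of_lipschitz hφdiff hφlip) hDsc hβ hαβ hδ
    hgradD (fun i => rfl) hstep
  have hgap := dual_gap_le hR hDsc hβ hDatt hgradD (fun i => rfl)
    fun J hJ => hgreedy J (hJ.trans hI)
  rw [hI] at hdual hgap
  rw [← hxnext, ← hxbarD] at hprog
  rw [← hxbarD, norm_sub_rev] at hgrowth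
  exact potential_step_le hμ hμL hβ hδ (by exact_mod_cast hk1) (by exact_mod_cast hn)
    ((sq_nonneg _).trans (hR ⟨0, hn⟩)) (sq_nonneg _) hη hq hdual hgap hgrowth hprog

theorem stmt_10 {n d : ℕ} (a : Fin n → EuclideanSpace ℝ (Fin d)) (R : ℝ)
    (hR : ∀ i, ‖a i‖ ^ 2 ≤ R)
    (g : EuclideanSpace ℝ (Fin d) → ℝ)
    (g' : EuclideanSpace ℝ (Fin d) → EuclideanSpace ℝ (Fin d))
    (μ L : ℝ) (hμ : 0 < μ) (hμL : μ ≤ L)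
    (hgdiff : ∀ x, HasGradientAt g (g' x) x)
    (hgsc : ∀ u v, g u + ⟪g' u, v - u⟫ + μ / 2 * ‖v - u‖ ^ 2 ≤ g v)
    (hgsm : ∀ u v, g v ≤ g u + ⟪g' u, v - u⟫ + L / 2 * ‖v - u‖ ^ 2)
    (φ : EuclideanSpace ℝ (Fin n) → ℝ)
    (φ' : EuclideanSpace ℝ (Fin n) → EuclideanSpace ℝ (Fin n))
    (α : ℝ) (hα : 0 < α)
    (hφdiff : ∀ y, HasGradientAt φ (φ' y) y)
    (hφconv : ConvexOn ℝ Set.univ φ)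
    (hφlip : ∀ u v, ‖φ' u - φ' v‖ ≤ (1 / α) * ‖u - v‖)
    (Lag : EuclideanSpace ℝ (Fin d) → EuclideanSpace ℝ (Fin n) → ℝ)
    (hLag : ∀ x y, Lag x y = g x + (1 / n : ℝ) * (∑ i, y i * ⟪a i, x⟫) - φ y)
    (C : Set (EuclideanSpace ℝ (Fin d)))
    (hCne : C.Nonempty) (hCcl : IsClosed C) (hCconv : Convex ℝ C)
    (D : EuclideanSpace ℝ (Fin n) → ℝ)
    (hD : ∀ y, IsLeast ((fun x => Lag x y) '' C) (D y))
    (D' : EuclideanSpace ℝ (Fin n) → EuclideanSpace ℝ (Fin n))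
    (β : ℝ) (hβ : 0 < β)
    (hDdiff : ∀ y, HasGradientAt D (D' y) y)
    (hDsc : ∀ u v, (-D u) + ⟪-D' u, v - u⟫ + (1 / β) / 2 * ‖v - u‖ ^ 2 ≤ -D v)
    (Dstar : ℝ) (hDub : ∀ y, D y ≤ Dstar) (hDatt : ∃ y, D y = Dstar)
    -- 2α ≥ β
    (hαβ : β ≤ 2 * α)
    (δ : ℝ) (hδ : 0 < δ) (k : ℕ) (hk1 : 1 ≤ k) (hkn : k ≤ n)
    (η : ℝ) (hη : η = μ / (2 * L))
    (hq : 5 * R * δ * k / (μ * n ^ 2) ≤ 1)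
    -- state
    (xt : EuclideanSpace ℝ (Fin d)) (hxtC : xt ∈ C)
    (yprev : EuclideanSpace ℝ (Fin n))
    -- (i) dual-optimal primal point
    (yt : EuclideanSpace ℝ (Fin n))
    (xbar : EuclideanSpace ℝ (Fin d)) (hxbarC : xbar ∈ C)
    (hxbarD : D yt = Lag xbar yt)
    (hgradD : ∀ i, D' yt i = (1 / n : ℝ) * ⟪a i, xbar⟫ - φ' yt i)
    -- (ii) greedy block dual update with w i = (1/n)⟪a i, xt⟫ - φ' yt i
    (I : Finset (Fin n)) (hI : I.card = k)
    (hgreedy : ∀ J : Finset (Fin n), J.card = k →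
        ∑ i ∈ J, ((1 / n : ℝ) * ⟪a i, xt⟫ - φ' yt i) ^ 2 ≤
          ∑ i ∈ I, ((1 / n : ℝ) * ⟪a i, xt⟫ - φ' yt i) ^ 2)
    (hin : ∀ i ∈ I, yt i = yprev i + δ * ((1 / n : ℝ) * ⟪a i, xt⟫ - φ' yt i))
    (hout : ∀ i ∉ I, yt i = yprev i)
    -- (iii) block Frank-Wolfe primal update
    (xtil : EuclideanSpace ℝ (Fin d)) (hxtilC : xtil ∈ C)
    (hfw : ⟪g' xt + (n : ℝ)⁻¹ • ∑ i, yt i • a i, xtil⟫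
          + L * η / 2 * ‖xtil - xt‖ ^ 2 ≤
        ⟪g' xt + (n : ℝ)⁻¹ • ∑ i, yt i • a i, xbar⟫
          + L * η / 2 * ‖xbar - xt‖ ^ 2)
    (xnext : EuclideanSpace ℝ (Fin d)) (hxnext : xnext = (1 - η) • xt + η • xtil) :
    ((Dstar - D yt) - (Dstar - D yprev)) +
        ((Lag xnext yt - D yt) - (Lag xt yprev - D yprev)) ≤
      -(k * δ / (2 * n * β) : ℝ) * (Dstar - D yt) -
        ((1 - 5 * R * δ * k / (μ * n ^ 2)) * (μ / (4 * L)) -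
            5 * R * δ * k / (μ * n ^ 2)) * (Lag xnext yt - D yt) :=
  stmt_10_general a R hR g g' μ L hμ hμL hgsc hgsm φ φ' α hφdiff hφlip Lag hLag C hCconv D hD D' β
    hβ hDsc Dstar hDatt hαβ δ hδ k hk1 hkn η hη hq xt hxtC yprev yt xbar hxbarC hxbarD hgradD I hI
    hgreedy hin hout xtil hfw xnext hxnext
end GradientInequalities
end

section
/- Let f : ℝ → ℝ be differentiable and convex, let a < b be real numbers, and suppose f is affine on (−∞, a] (i.e. f(x) = f(a) + f′(a)(x − a) for all x ≤ a) and affine on [b, ∞) (i.e. f(x) = f(b) + f′(b)(x − b) for all x ≥ b). Then: (1) f*(z) = +∞ for every z ∉ [f′(a), f′(b)]; and (2) for every z ∈ [f′(a), f′(b)], the supremum defining f*(z) is finite and attained on [a, b], i.e. f*(z) = max_{x∈[a,b]}(z·x − f(x)). -/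
theorem stmt_15 (f : ℝ → ℝ) (hdiff : Differentiable ℝ f)
    (hconv : ConvexOn ℝ Set.univ f)
    (a b : ℝ) (hab : a < b)
    (haff_left : ∀ x ≤ a, f x = f a + deriv f a * (x - a))
    (haff_right : ∀ x ≥ b, f x = f b + deriv f b * (x - b))
    (fconj : ℝ → EReal)
    (hfconj : ∀ z, fconj z = ⨆ x : ℝ, ((z * x - f x : ℝ) : EReal)) :
    (∀ z : ℝ, z ∉ Set.Icc (deriv f a) (deriv f b) → fconj z = ⊤) ∧
    (∀ z ∈ Set.Icc (deriv f a) (deriv f b),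
      ∃ x₀ ∈ Set.Icc a b,
        (∀ x : ℝ, z * x - f x ≤ z * x₀ - f x₀) ∧
        fconj z = ((z * x₀ - f x₀ : ℝ) : EReal)) := by
  constructor
  · intro z hz
    rw [hfconj]
    have hforall : ∀ r : ℝ, ∃ x : ℝ, r ≤ z * x - f x := by
      intro r
      rcases lt_or_ge z (deriv f a) with h | h
      · set s := deriv f a - z with hs
        have hspos : 0 < s := by simp [hs]; linarith
        set t := max 0 ((r - (z * a - f a)) / s) with ht
        have ht0 : 0 ≤ t := le_max_left _ _
        refine ⟨a - t, ?_⟩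
        have hfa : f (a - t) = f a + deriv f a * ((a - t) - a) :=
          haff_left _ (by linarith)
        have h2 : (r - (z * a - f a)) / s ≤ t := le_max_right _ _
        have h3 : r - (z * a - f a) ≤ t * s := (div_le_iff₀ hspos).mp h2
        have : z * (a - t) - f (a - t) = (z * a - f a) + t * s := by
          rw [hfa]; ring
        linarith
      · have h' : deriv f b < z := by
          rcases lt_or_ge (deriv f b) z with h1 | h1
          · exact h1
          · exact absurd ⟨h, h1⟩ hz
        set s := z - deriv f b with hs
        have hspos : 0 < s := by simp [hs]; linarith
        set t := max 0 ((r - (z * b - f b)) / s) with ht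
        have ht0 : 0 ≤ t := le_max_left _ _
        refine ⟨b + t, ?_⟩
        have hfb : f (b + t) = f b + deriv f b * ((b + t) - b) :=
          haff_right _ (by linarith)
        have h2 : (r - (z * b - f b)) / s ≤ t := le_max_right _ _
        have h3 : r - (z * b - f b) ≤ t * s := (div_le_iff₀ hspos).mp h2
        have : z * (b + t) - f (b + t) = (z * b - f b) + t * s := by
          rw [hfb]; ring
        linarith
    rw [EReal.eq_top_iff_forall_lt]
    intro y
    obtain ⟨x, hx⟩ := hforall (y + 1)
    calc (y : EReal) < ((y + 1 : ℝ) : EReal) := by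
            exact_mod_cast (by linarith : y < y + 1)
      _ ≤ ((z * x - f x : ℝ) : EReal) := by exact_mod_cast hx
      _ ≤ ⨆ x : ℝ, ((z * x - f x : ℝ) : EReal) :=
            le_iSup (fun x : ℝ => ((z * x - f x : ℝ) : EReal)) x
  · intro z hz
    have hc : ContinuousOn (fun x : ℝ => z * x - f x) (Set.Icc a b) :=
      ((continuous_const.mul continuous_id).sub hdiff.continuous).continuousOn
    obtain ⟨x₀, hx₀mem, hmax⟩ :=
      isCompact_Icc.exists_isMaxOn ⟨a, Set.left_mem_Icc.mpr hab.le⟩ hc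
    have hglob : ∀ x : ℝ, z * x - f x ≤ z * x₀ - f x₀ := by
      intro x
      have hga : z * a - f a ≤ z * x₀ - f x₀ :=
        hmax (Set.left_mem_Icc.mpr hab.le)
      have hgb : z * b - f b ≤ z * x₀ - f x₀ :=
        hmax (Set.right_mem_Icc.mpr hab.le)
      rcases le_or_gt x a with h1 | h1
      · have hfx := haff_left x h1
        have : z * x - f x = (z * a - f a) + (z - deriv f a) * (x - a) := by
          rw [hfx]; ring
        nlinarith [hz.1, mul_nonneg (sub_nonneg.mpr hz.1) (sub_nonneg.mpr h1)]
      · rcases le_or_gt x b with h2 | h2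
        · exact hmax ⟨h1.le, h2⟩
        · have hfx := haff_right x h2.le
          have : z * x - f x = (z * b - f b) + (z - deriv f b) * (x - b) := by
            rw [hfx]; ring
          nlinarith [mul_nonpos_of_nonpos_of_nonneg
            (sub_nonpos.mpr hz.2) (sub_nonneg.mpr h2.le)]
    refine ⟨x₀, hx₀mem, hglob, ?_⟩
    rw [hfconj]
    apply le_antisymm
    · exact iSup_le fun x => EReal.coe_le_coe_iff.mpr (hglob x)
    · exact le_iSup (fun x : ℝ => ((z * x - f x : ℝ) : EReal)) x₀
end

section
/- Define the smooth hinge loss h : ℝ → ℝ by h(z) = 1/2 − z for z < 0, h(z) = (1 − z)²/2 for 0 ≤ z ≤ 1, and h(z) = 0 for z > 1. Then its convex conjugate h*(z) = sup_{t∈ℝ}(z·t − h(t)) satisfies h*(z) = z²/2 + z for every z ∈ [−1, 0], and h*(z) = +∞ for every z ∉ [−1, 0]. -/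
theorem stmt_17 (h : ℝ → ℝ)
    (hdef : ∀ z : ℝ, h z =
      if z < 0 then 1 / 2 - z else if z ≤ 1 then (1 - z) ^ 2 / 2 else 0)
    (hconj : ℝ → EReal)
    (hconjdef : ∀ z, hconj z = ⨆ t : ℝ, ((z * t - h t : ℝ) : EReal)) :
    (∀ z ∈ Set.Icc (-1 : ℝ) 0, hconj z = ((z ^ 2 / 2 + z : ℝ) : EReal)) ∧
    (∀ z : ℝ, z ∉ Set.Icc (-1 : ℝ) 0 → hconj z = ⊤) := by
  constructor
  · rintro z ⟨hz1, hz0⟩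
    rw [hconjdef]
    apply le_antisymm
    · apply iSup_le
      intro t
      rw [EReal.coe_le_coe_iff, hdef t]
      split_ifs with h1 h2
      · nlinarith [mul_nonpos_of_nonneg_of_nonpos (by linarith : (0:ℝ) ≤ z + 1) h1.le]
      · nlinarith [sq_nonneg (z + 1 - t)]
      · push_neg at h1 h2
        nlinarith [sq_nonneg z]
    · have key : ((z ^ 2 / 2 + z : ℝ) : EReal) = ((z * (1 + z) - h (1 + z) : ℝ) : EReal) := by
        rw [hdef]
        rw [if_neg (by linarith), if_pos (by linarith)]
        exact congrArg _ (by ring)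
      rw [key]
      exact le_iSup (fun t : ℝ => ((z * t - h t : ℝ) : EReal)) (1 + z)
  · intro z hz
    rw [hconjdef, iSup_eq_top]
    intro b hb
    obtain ⟨r, hbr, -⟩ := EReal.exists_between_coe_real hb
    simp only [Set.mem_Icc, not_and_or, not_le] at hz
    rcases hz with hz | hz
    · -- z < -1 : take t very negative
      refine ⟨min (-1) ((r + 1) / (z + 1)), ?_⟩
      refine lt_of_lt_of_le hbr (EReal.coe_le_coe_iff.mpr ?_)
      set t := min (-1) ((r + 1) / (z + 1)) with ht
      have htneg : t < 0 := lt_of_le_of_lt (min_le_left _ _) (by norm_num)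
      rw [hdef, if_pos htneg]
      have hz1 : z + 1 < 0 := by linarith
      have : t ≤ (r + 1) / (z + 1) := min_le_right _ _
      have h2 : r + 1 ≤ t * (z + 1) := (le_div_iff_of_neg hz1).mp this
      nlinarith
    · -- z > 0 : take t large
      refine ⟨max 2 ((r + 1) / z), ?_⟩
      refine lt_of_lt_of_le hbr (EReal.coe_le_coe_iff.mpr ?_)
      set t := max 2 ((r + 1) / z) with ht
      have htg : (1:ℝ) < t := lt_of_lt_of_le (by norm_num) (le_max_left _ _)
      rw [hdef, if_neg (by linarith), if_neg (by linarith)]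
      have : (r + 1) / z ≤ t := le_max_right _ _
      have h2 : r + 1 ≤ z * t := by
        rw [← div_le_iff₀' hz]
        exact this
      linarith
end
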